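/- arXiv:0911.2515 — 9 statements merged into one kernel-verified Lean document; each statement's English description precedes it below -/
import Mathlib

section
/- For every integer d ≥ 2 and every unit vector ψ in the antisymmetric subspace of ℂ^d ⊗ ℂ^d, the largest squared Schmidt coefficient of ψ satisfies λ_max(ψ) ≤ 1/2. -/
open scoped BigOperators
open Matrix Kronecker

noncomputable section

/-- Outer product `|ψ⟩⟨ψ|` of a vector with itself. -/
def outer {n : Type*} [Fintype n] (ψ : n → ℂ) : Matrix n n ℂ :=
  fun i j => ψ i * (starRingEnd ℂ) (ψ j)

/-- Partial trace over the first tensor factor. -/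
def ptraceA {α β : Type*} [Fintype α] (M : Matrix (α × β) (α × β) ℂ) :
    Matrix β β ℂ :=
  fun j j' => ∑ i, M (i, j) (i, j')

/-- Tensor (Kronecker) product of two vectors. -/
def tensorVec {α β : Type*} (ψ : α → ℂ) (φ : β → ℂ) : α × β → ℂ :=
  fun x => ψ x.1 * φ x.2

/-- The swap operator `V(x ⊗ y) = y ⊗ x` as a matrix on `ℂ^d ⊗ ℂ^d`. -/
def swapMat (d : ℕ) : Matrix (Fin d × Fin d) (Fin d × Fin d) ℂ :=
  fun p q => if p.1 = q.2 ∧ p.2 = q.1 then 1 else 0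

/-- Projector onto the antisymmetric subspace: `P_a = (I - V)/2`. -/
def Pa (d : ℕ) : Matrix (Fin d × Fin d) (Fin d × Fin d) ℂ :=
  (1 / 2 : ℂ) • ((1 : Matrix (Fin d × Fin d) (Fin d × Fin d) ℂ) - swapMat d)

/-- Eigenvalues of a matrix (real, via the spectral theorem);
junk value `0` if the matrix is not Hermitian. -/
def specVals {n : Type*} [Fintype n] [DecidableEq n] (ρ : Matrix n n ℂ) : n → ℝ :=
  if h : ρ.IsHermitian then h.eigenvalues else 0

/-- Largest eigenvalue of a (Hermitian) matrix. -/
def lambdaMax {n : Type*} [Fintype n] [DecidableEq n] (ρ : Matrix n n ℂ) : ℝ :=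
  ⨆ i, specVals ρ i

/-- Rényi `p`-entropy (base 2): `S_p(ρ) = (1/(1-p)) log₂ Tr ρ^p` for `p ≠ 1`;
at `p = 1` it is the von Neumann entropy `-Tr ρ log₂ ρ`. -/
def Sp {n : Type*} [Fintype n] [DecidableEq n] (p : ℝ) (ρ : Matrix n n ℂ) : ℝ :=
  if p = 1 then ∑ i, -(specVals ρ i * Real.logb 2 (specVals ρ i))
  else (1 / (1 - p)) * Real.logb 2 (∑ i, specVals ρ i ^ p)

/-- Regrouping of a vector on `(A×B) ⊗ (A'×B')` as a vector on `(A×A') ⊗ (B×B')`. -/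
def regroup {α β : Type*} (Ψ : (α × β) × (α × β) → ℂ) : (α × α) × (β × β) → ℂ :=
  fun q => Ψ ((q.1.1, q.2.1), (q.1.2, q.2.2))

/-- Regrouping of a matrix on `(A×B) ⊗ (A'×B')` as a matrix on `(A×A') ⊗ (B×B')`. -/
def regroupMat {α β : Type*}
    (M : Matrix ((α × β) × (α × β)) ((α × β) × (α × β)) ℂ) :
    Matrix ((α × α) × (β × β)) ((α × α) × (β × β)) ℂ :=
  fun x y => M ((x.1.1, x.2.1), (x.1.2, x.2.2)) ((y.1.1, y.2.1), (y.1.2, y.2.2))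

/-- Binary entropy function (base 2). -/
def binEnt (x : ℝ) : ℝ := -(x * Real.logb 2 x) - (1 - x) * Real.logb 2 (1 - x)

/-- Output of the channel with Choi–Jamiołkowski state `τ`:
`Λ(ρ) = d · Tr_A[(ρ^T ⊗ I) τ]`, applied to the pure input `ρ = |Φ⟩⟨Φ|`. -/
def choiOutput {m n : Type*} [Fintype m] [Fintype n] [DecidableEq n]
    (τ : Matrix (m × n) (m × n) ℂ) (Φ : m → ℂ) : Matrix n n ℂ :=
  (Fintype.card m : ℂ) • ptraceA (((outer Φ)ᵀ ⊗ₖ (1 : Matrix n n ℂ)) * τ)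

/-! Write `ψ` as a skew-symmetric matrix `M`. For a unit vector `u`, put `z = M u` and
`S = ‖z‖²`; every eigenvalue of the reduced state is such an `S` (with `u` the conjugate of a
unit eigenvector). Skew-symmetry makes `uᵀ z = 0` and gives `⟨z ∧ ū, ψ⟩ = 2S`, and Lagrange's
identity then gives `‖z ∧ ū‖² = 2S`. Cauchy–Schwarz yields `(2S)² ≤ 2S ‖ψ‖²`, i.e.
`S ≤ ‖ψ‖² / 2`. -/

open Matrix

section Wedge

variable {R n : Type*} [CommRing R] [StarRing R] [Fintype n]

def wedge (x y : n → R) : n × n → R := fun p => x p.1 * y p.2 - y p.1 * x p.2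

theorem star_wedge_dotProduct_wedge (x y : n → R) :
    star (wedge x y) ⬝ᵥ wedge x y =
      2 * ((star x ⬝ᵥ x) * (star y ⬝ᵥ y) - (star x ⬝ᵥ y) * (star y ⬝ᵥ x)) := by
  set f : n → n → R := fun i j =>
    star (x i) * x i * (star (y j) * y j) - star (x i) * y i * (star (y j) * x j)
  calc star (wedge x y) ⬝ᵥ wedge x y = ∑ i, ∑ j, (f i j + f j i) := by
        simp only [dotProduct, Fintype.sum_prod_type, wedge, Pi.star_apply, star_sub, star_mul']
        exact Finset.sum_congr rfl fun i _ => Finset.sum_congr rfl fun j _ => by ring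
    _ = 2 * ∑ i, ∑ j, f i j := by
        simp only [Finset.sum_add_distrib]
        rw [Finset.sum_comm (f := fun i j => f j i)]
        ring
    _ = _ := by
        simp only [f, dotProduct, Finset.sum_mul_sum, Finset.sum_sub_distrib, Pi.star_apply]

theorem star_wedge_dotProduct_uncurry {M : Matrix n n R} (hM : Mᵀ = -M) (x y : n → R) :
    star (wedge x y) ⬝ᵥ Function.uncurry M = 2 * (star x ⬝ᵥ (M *ᵥ star y)) := by
  have hskew : ∀ i j, M j i = -M i j := fun i j => by
    simpa using congrFun (congrFun hM i) j
  set f : n → n → R := fun i j => star (x i) * M i j * star (y j)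
  calc star (wedge x y) ⬝ᵥ Function.uncurry M = ∑ i, ∑ j, (f i j - -f j i) := by
        simp only [dotProduct, Fintype.sum_prod_type, wedge, Pi.star_apply, star_sub, star_mul',
          Function.uncurry]
        refine Finset.sum_congr rfl fun i _ => Finset.sum_congr rfl fun j _ => ?_
        simp only [f, hskew i j]
        ring
    _ = 2 * ∑ i, ∑ j, f i j := by
        simp only [Finset.sum_sub_distrib, Finset.sum_neg_distrib]
        rw [Finset.sum_comm (f := fun i j => f j i)]
        ring
    _ = _ := by
        simp only [f, dotProduct, mulVec, Finset.mul_sum, Pi.star_apply, mul_assoc]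

end Wedge

theorem dotProduct_mulVec_self_eq_zero {R n : Type*} [CommRing R] [IsAddTorsionFree R]
    [Fintype n] {M : Matrix n n R} (hM : Mᵀ = -M) (x : n → R) : x ⬝ᵥ (M *ᵥ x) = 0 := by
  refine self_eq_neg.mp ?_
  calc x ⬝ᵥ (M *ᵥ x) = (Mᵀ *ᵥ x) ⬝ᵥ x := by rw [dotProduct_mulVec, mulVec_transpose]
    _ = -(x ⬝ᵥ (M *ᵥ x)) := by rw [hM, neg_mulVec, neg_dotProduct, dotProduct_comm]

theorem star_dotProduct_self_eq_sum_norm_sq {n : Type*} [Fintype n] (a : n → ℂ) :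
    star a ⬝ᵥ a = ((∑ i, ‖a i‖ ^ 2 : ℝ) : ℂ) := by
  push_cast
  exact Finset.sum_congr rfl fun i _ => Complex.conj_mul' (a i)

theorem sum_norm_sq_mulVec_le {n : Type*} [Fintype n] {M : Matrix n n ℂ} (hM : Mᵀ = -M)
    {u : n → ℂ} (hu : ∑ i, ‖u i‖ ^ 2 = 1) :
    ∑ i, ‖(M *ᵥ u) i‖ ^ 2 ≤ (∑ p, ‖Function.uncurry M p‖ ^ 2) / 2 := by
  set z := M *ᵥ u
  set S := ∑ i, ‖z i‖ ^ 2
  set N := ∑ p, ‖Function.uncurry M p‖ ^ 2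
  set w := WithLp.toLp 2 (wedge z (star u))
  set Ψ := WithLp.toLp 2 (Function.uncurry M)
  have hz : star z ⬝ᵥ z = S := star_dotProduct_self_eq_sum_norm_sq z
  have hu_star : star (star u) ⬝ᵥ star u = 1 := by
    rw [dotProduct_comm, star_star, star_dotProduct_self_eq_sum_norm_sq, hu, Complex.ofReal_one]
  have horth : u ⬝ᵥ z = 0 := dotProduct_mulVec_self_eq_zero hM u
  have hw : ‖w‖ ^ 2 = 2 * S := by
    rw [EuclideanSpace.norm_sq_eq, ← Complex.ofReal_inj, ← star_dotProduct_self_eq_sum_norm_sq,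
      star_wedge_dotProduct_wedge, hz, hu_star, star_star, horth, star_dotProduct_star, horth]
    push_cast
    ring
  have hwΨ : inner ℂ w Ψ = 2 * S := by
    rw [EuclideanSpace.inner_toLp_toLp, dotProduct_comm, star_wedge_dotProduct_uncurry hM,
      star_star, hz]
  have hΨ : ‖Ψ‖ ^ 2 = N := EuclideanSpace.norm_sq_eq Ψ
  have hS : 0 ≤ S := by positivity
  have hCS : (2 * S) ^ 2 ≤ 2 * S * N :=
    calc (2 * S) ^ 2 = ‖inner ℂ w Ψ‖ ^ 2 := by
          rw [hwΨ, ← Complex.ofReal_ofNat, ← Complex.ofReal_mul, Complex.norm_real,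
            Real.norm_of_nonneg (by positivity)]
      _ ≤ (‖w‖ * ‖Ψ‖) ^ 2 := by gcongr; exact norm_inner_le_norm w Ψ
      _ = 2 * S * N := by rw [mul_pow, hw, hΨ]
  have hN : 0 ≤ N := by positivity
  nlinarith

theorem ptraceA_outer_isHermitian {α β : Type*} [Fintype α] [Fintype β] (ψ : α × β → ℂ) :
    (ptraceA (outer ψ)).IsHermitian := by
  ext j j'
  simp only [conjTranspose_apply, ptraceA, outer, star_sum, star_mul', RCLike.star_def,
    Complex.conj_conj]
  exact Finset.sum_congr rfl fun i _ => mul_comm _ _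

theorem star_dotProduct_ptraceA_outer_mulVec {α β : Type*} [Fintype α] [Fintype β]
    (ψ : α × β → ℂ) (v : β → ℂ) :
    star v ⬝ᵥ (ptraceA (outer ψ) *ᵥ v) =
      ((∑ i, ‖(of (Function.curry ψ) *ᵥ star v) i‖ ^ 2 : ℝ) : ℂ) := by
  rw [← star_dotProduct_self_eq_sum_norm_sq]
  simp only [dotProduct, mulVec, ptraceA, outer, Pi.star_apply, star_sum, star_mul', of_apply,
    Function.curry_apply, Finset.mul_sum, Finset.sum_mul, RCLike.star_def, Complex.conj_conj]
  rw [Finset.sum_congr rfl fun j _ => Finset.sum_comm, Finset.sum_comm]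
  exact Finset.sum_congr rfl fun i _ => Finset.sum_congr rfl fun j _ =>
    Finset.sum_congr rfl fun j' _ => by ring

theorem swapMat_mulVec_apply {d : ℕ} (ψ : Fin d × Fin d → ℂ) (i j : Fin d) :
    (swapMat d *ᵥ ψ) (i, j) = ψ (j, i) := by
  simp [mulVec, dotProduct, swapMat, Fintype.sum_prod_type, ite_and]

theorem transpose_eq_neg_of_Pa_mulVec_eq {d : ℕ} {ψ : Fin d × Fin d → ℂ}
    (hψ : Pa d *ᵥ ψ = ψ) : (of (Function.curry ψ))ᵀ = -of (Function.curry ψ) := by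
  ext i j
  have h := congrFun hψ (j, i)
  rw [Pa, smul_mulVec, sub_mulVec, one_mulVec, Pi.smul_apply, Pi.sub_apply,
    swapMat_mulVec_apply, smul_eq_mul] at h
  simp only [transpose_apply, of_apply, Function.curry_apply, Matrix.neg_apply]
  linear_combination -2 * h

theorem stmt0_general (d : ℕ) (ψ : Fin d × Fin d → ℂ)
    (hψ : ∑ x, ‖ψ x‖ ^ 2 = 1) (hanti : (Pa d).mulVec ψ = ψ) :
    lambdaMax (ptraceA (outer ψ)) ≤ 1 / 2 := by
  have hH := ptraceA_outer_isHermitian ψ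
  rw [lambdaMax, specVals, dif_pos hH]
  refine Real.iSup_le (fun k => ?_) (by norm_num)
  have hv : ∑ j, ‖star (⇑(hH.eigenvectorBasis k)) j‖ ^ 2 = 1 := by
    simp [← EuclideanSpace.norm_sq_eq, hH.eigenvectorBasis.orthonormal.1 k]
  rw [hH.eigenvalues_eq, star_dotProduct_ptraceA_outer_mulVec, RCLike.re_to_complex,
    Complex.ofReal_re, ← hψ]
  exact sum_norm_sq_mulVec_le (transpose_eq_neg_of_Pa_mulVec_eq hanti) hv

/-- every unit vector of the antisymmetric subspace of `ℂ^d ⊗ ℂ^d`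
(`d ≥ 2`) has largest squared Schmidt coefficient at most `1/2`. -/
theorem stmt0 (d : ℕ) (hd : 2 ≤ d) (ψ : Fin d × Fin d → ℂ)
    (hψ : ∑ x, ‖ψ x‖ ^ 2 = 1) (hanti : (Pa d).mulVec ψ = ψ) :
    lambdaMax (ptraceA (outer ψ)) ≤ 1 / 2 :=
  stmt0_general d ψ hψ hanti
end
end

section
/- For every integer d ≥ 2, every unit vector ψ in the antisymmetric subspace of ℂ^d ⊗ ℂ^d, and every real p with p > 0 (including the von Neumann case p = 1), the Rényi entropy of the reduced density matrix satisfies S_p(Tr_A |ψ⟩⟨ψ|) ≥ 1. -/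
open scoped BigOperators
open Matrix Kronecker

noncomputable section

/-!
Write `C i j = ψ (i, j)`. Antisymmetry of `ψ` is `Cᵀ = -C`, so the reduced state `Cᵀ (Cᵀ)ᴴ`
equals `C Cᴴ`, a positive semidefinite matrix of trace `‖C‖_F² = 1` whose eigenvalues are
`‖Cᴴ v‖²` for unit eigenvectors `v`. For antisymmetric `A` and `u = A w`, antisymmetry gives
`2‖u‖² = ∑ᵢⱼ Aᵢⱼ (ūᵢ wⱼ - ūⱼ wᵢ)`; Cauchy–Schwarz and `∑ᵢⱼ |aᵢ wⱼ - aⱼ wᵢ|² ≤ 2 ‖a‖² ‖w‖²`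
then give `2‖u‖² ≤ ‖A‖_F² ‖w‖²`. So every eigenvalue is at most `1/2`, and a probability vector
bounded by `c` has every Rényi entropy at least `-log₂ c`.
-/

open Real
open scoped ComplexConjugate ComplexOrder

section Antisymmetric

variable {𝕜 n : Type*} [RCLike 𝕜] [Fintype n]

theorem sum_norm_mul_sub_mul_sq_le (a w : n → 𝕜) :
    ∑ i, ∑ j, ‖a i * w j - a j * w i‖ ^ 2 ≤ 2 * (∑ i, ‖a i‖ ^ 2) * ∑ j, ‖w j‖ ^ 2 := by
  set z := ∑ i, conj (a i) * w i
  have cross : ∑ i, ∑ j, RCLike.re (conj (a i * w j) * (a j * w i)) = ‖z‖ ^ 2 := by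
    calc _ = RCLike.re (z * conj z) := by
          simp only [z, map_sum, map_mul, RCLike.conj_conj, Finset.sum_mul_sum]
          exact Fintype.sum_congr _ _ fun i => Fintype.sum_congr _ _ fun j => by ring_nf
      _ = ‖z‖ ^ 2 := by rw [RCLike.mul_conj]; norm_cast
  have diag : ∑ i, ∑ j, ‖a i * w j‖ ^ 2 = (∑ i, ‖a i‖ ^ 2) * ∑ j, ‖w j‖ ^ 2 := by
    simp only [norm_mul, mul_pow, Finset.sum_mul_sum]
  have diag_swap : ∑ i, ∑ j, ‖a j * w i‖ ^ 2 = (∑ i, ‖a i‖ ^ 2) * ∑ j, ‖w j‖ ^ 2 := by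
    rw [Finset.sum_comm, diag]
  have expand (x y : 𝕜) : ‖x - y‖ ^ 2 = ‖x‖ ^ 2 + ‖y‖ ^ 2 - 2 * RCLike.re (conj x * y) := by
    rw [@norm_sub_sq 𝕜, RCLike.inner_apply']
    ring
  simp only [expand, Finset.sum_sub_distrib, Finset.sum_add_distrib, ← Finset.mul_sum, cross,
    diag, diag_swap]
  linarith [sq_nonneg ‖z‖]

theorem two_mul_sum_norm_mulVec_sq_le {A : Matrix n n 𝕜} (hA : Aᵀ = -A) (w : n → 𝕜) :
    2 * ∑ i, ‖(A *ᵥ w) i‖ ^ 2 ≤ (∑ i, ∑ j, ‖A i j‖ ^ 2) * ∑ j, ‖w j‖ ^ 2 := by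
  set u := A *ᵥ w
  set S := ∑ i, ‖u i‖ ^ 2
  have hanti (i j : n) : A j i = -A i j := by simpa using congrFun (congrFun hA i) j
  have hS : ((2 * S : ℝ) : 𝕜) = ∑ i, ∑ j, A i j * (conj (u i) * w j - conj (u j) * w i) := by
    have h : (S : 𝕜) = ∑ i, ∑ j, A i j * (conj (u i) * w j) := by
      simp only [S, RCLike.ofReal_sum, RCLike.ofReal_pow, ← RCLike.conj_mul, u, mulVec,
        dotProduct, Finset.mul_sum]
      exact Fintype.sum_congr _ _ fun i => Fintype.sum_congr _ _ fun j => by ring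
    have h' : (S : 𝕜) = -∑ i, ∑ j, A i j * (conj (u j) * w i) := by
      rw [h, Finset.sum_comm, ← Finset.sum_neg_distrib]
      refine Fintype.sum_congr _ _ fun i => ?_
      rw [← Finset.sum_neg_distrib]
      exact Fintype.sum_congr _ _ fun j => by rw [hanti]; ring
    simp only [mul_sub, Finset.sum_sub_distrib]
    push_cast
    linear_combination h + h'
  have hCS : (2 * S) ^ 2 ≤ (∑ i, ∑ j, ‖A i j‖ ^ 2) * (2 * S * ∑ j, ‖w j‖ ^ 2) := by
    calc (2 * S) ^ 2 = ‖((2 * S : ℝ) : 𝕜)‖ ^ 2 := by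
          rw [RCLike.norm_ofReal, abs_of_nonneg (by positivity)]
      _ ≤ (∑ i, ∑ j, ‖A i j‖ * ‖conj (u i) * w j - conj (u j) * w i‖) ^ 2 := by
          rw [hS]
          gcongr
          refine (norm_sum_le _ _).trans (Finset.sum_le_sum fun i _ => ?_)
          refine (norm_sum_le _ _).trans (Finset.sum_le_sum fun j _ => ?_)
          rw [norm_mul]
      _ ≤ (∑ i, ∑ j, ‖A i j‖ ^ 2) * ∑ i, ∑ j, ‖conj (u i) * w j - conj (u j) * w i‖ ^ 2 := by
          simp only [← Fintype.sum_prod_type']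
          exact Finset.sum_mul_sq_le_sq_mul_sq _ _ _
      _ ≤ (∑ i, ∑ j, ‖A i j‖ ^ 2) * (2 * S * ∑ j, ‖w j‖ ^ 2) := by
          gcongr
          simpa only [RCLike.norm_conj] using sum_norm_mul_sub_mul_sq_le (fun i => conj (u i)) w
  rcases (show 0 ≤ S by positivity).eq_or_lt with hS0 | hSpos
  · rw [← hS0, mul_zero]; positivity
  · nlinarith

theorem star_dotProduct_self_eq (v : n → 𝕜) : star v ⬝ᵥ v = ((∑ i, ‖v i‖ ^ 2 : ℝ) : 𝕜) := by
  simp [dotProduct, RCLike.conj_mul]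

theorem trace_mul_conjTranspose_self (M : Matrix n n 𝕜) :
    (M * Mᴴ).trace = ((∑ i, ∑ j, ‖M i j‖ ^ 2 : ℝ) : 𝕜) := by
  simp [trace, mul_apply, RCLike.mul_conj]

theorem two_mul_eigenvalues_mul_conjTranspose_self_le [DecidableEq n] {M : Matrix n n 𝕜}
    (hM : Mᵀ = -M) (hH : (M * Mᴴ).IsHermitian) (k : n) :
    2 * hH.eigenvalues k ≤ ∑ i, ∑ j, ‖M i j‖ ^ 2 := by
  set v := ⇑(hH.eigenvectorBasis k)
  have hv : ∑ j, ‖v j‖ ^ 2 = 1 := by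
    have := hH.eigenvectorBasis.orthonormal.1 k
    rwa [EuclideanSpace.norm_eq, Real.sqrt_eq_one] at this
  have hq : hH.eigenvalues k = ∑ i, ‖(Mᴴ *ᵥ v) i‖ ^ 2 := by
    have hstar : star v ᵥ* M = star (Mᴴ *ᵥ v) := by
      rw [star_mulVec, conjTranspose_conjTranspose]
    rw [hH.eigenvalues_eq, ← mulVec_mulVec, dotProduct_mulVec, hstar,
      star_dotProduct_self_eq, RCLike.ofReal_re]
  have hMH : (Mᴴ)ᵀ = -Mᴴ := by
    rw [← conjTranspose_transpose_eq_transpose_conjTranspose, hM, conjTranspose_neg]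
  have hbound := two_mul_sum_norm_mulVec_sq_le hMH v
  rw [hv, mul_one, ← hq, Finset.sum_comm] at hbound
  simpa only [conjTranspose_apply, norm_star] using hbound

end Antisymmetric

section Entropy

variable {ι : Type*} [Fintype ι] {b c p : ℝ} {w : ι → ℝ}

theorem Real.rpow_eq_mul_rpow_sub_one {x : ℝ} (hx : 0 ≤ x) (hp : p ≠ 0) :
    x ^ p = x * x ^ (p - 1) := by
  rw [← rpow_one_add' hx (by simpa using hp), add_sub_cancel]

theorem neg_logb_le_sum_neg_mul_logb (hb : 1 < b) (h0 : ∀ i, 0 ≤ w i) (hc : ∀ i, w i ≤ c)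
    (hsum : ∑ i, w i = 1) : -logb b c ≤ ∑ i, -(w i * logb b (w i)) := by
  calc -logb b c = ∑ i, -(w i * logb b c) := by
        rw [Finset.sum_neg_distrib, ← Finset.sum_mul, hsum, one_mul]
    _ ≤ ∑ i, -(w i * logb b (w i)) := by
        refine Finset.sum_le_sum fun i _ => ?_
        rcases (h0 i).eq_or_lt with hi | hi
        · simp [← hi]
        · exact neg_le_neg (mul_le_mul_of_nonneg_left (logb_le_logb_of_le hb hi (hc i)) hi.le)

theorem le_sum_rpow_of_le_one (hp0 : 0 < p) (hp1 : p ≤ 1) (h0 : ∀ i, 0 ≤ w i)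
    (hc : ∀ i, w i ≤ c) (hsum : ∑ i, w i = 1) : c ^ (p - 1) ≤ ∑ i, w i ^ p := by
  calc c ^ (p - 1) = ∑ i, w i * c ^ (p - 1) := by rw [← Finset.sum_mul, hsum, one_mul]
    _ ≤ ∑ i, w i * w i ^ (p - 1) := by
        refine Finset.sum_le_sum fun i _ => ?_
        rcases (h0 i).eq_or_lt with hi | hi
        · simp [← hi]
        · exact mul_le_mul_of_nonneg_left (rpow_le_rpow_of_nonpos hi (hc i) (by linarith)) hi.le
    _ = ∑ i, w i ^ p := by simp only [← rpow_eq_mul_rpow_sub_one (h0 _) hp0.ne']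

theorem sum_rpow_le_of_one_le (hp1 : 1 ≤ p) (h0 : ∀ i, 0 ≤ w i)
    (hc : ∀ i, w i ≤ c) (hsum : ∑ i, w i = 1) : ∑ i, w i ^ p ≤ c ^ (p - 1) := by
  calc ∑ i, w i ^ p = ∑ i, w i * w i ^ (p - 1) := by
        simp only [← rpow_eq_mul_rpow_sub_one (h0 _) (by linarith : p ≠ 0)]
    _ ≤ ∑ i, w i * c ^ (p - 1) := by
        refine Finset.sum_le_sum fun i _ => ?_
        exact mul_le_mul_of_nonneg_left (rpow_le_rpow (h0 i) (hc i) (by linarith)) (h0 i)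
    _ = c ^ (p - 1) := by rw [← Finset.sum_mul, hsum, one_mul]

theorem neg_logb_le_renyi (hb : 1 < b) (hp0 : 0 < p) (hp1 : p ≠ 1) (h0 : ∀ i, 0 ≤ w i)
    (hc : ∀ i, w i ≤ c) (hsum : ∑ i, w i = 1) :
    -logb b c ≤ 1 / (1 - p) * logb b (∑ i, w i ^ p) := by
  obtain ⟨j, hj⟩ : ∃ j, 0 < w j := by
    by_contra! h
    have := Finset.sum_nonpos fun i (_ : i ∈ Finset.univ) => h i
    linarith
  have hcpos : 0 < c := hj.trans_le (hc j)
  have hlogc : logb b (c ^ (p - 1)) = (p - 1) * logb b c := logb_rpow_eq_mul_logb_of_pos hcpos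
  rw [div_mul_eq_mul_div, one_mul]
  rcases hp1.lt_or_gt with hlt | hgt
  · have hlog := logb_le_logb_of_le hb (by positivity) (le_sum_rpow_of_le_one hp0 hlt.le h0 hc hsum)
    rw [hlogc] at hlog
    rw [le_div_iff₀ (by linarith)]
    nlinarith
  · have hpos : 0 < ∑ i, w i ^ p :=
      Finset.sum_pos' (fun i _ => rpow_nonneg (h0 i) p) ⟨j, Finset.mem_univ j, rpow_pos_of_pos hj p⟩
    have hlog := logb_le_logb_of_le hb hpos (sum_rpow_le_of_one_le hgt.le h0 hc hsum)
    rw [hlogc] at hlog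
    rw [le_div_iff_of_neg (by linarith)]
    nlinarith

theorem neg_logb_le_Sp {n : Type*} [Fintype n] [DecidableEq n] {ρ : Matrix n n ℂ}
    (hρ : ρ.IsHermitian) (hp : 0 < p) (h0 : ∀ i, 0 ≤ hρ.eigenvalues i)
    (hc : ∀ i, hρ.eigenvalues i ≤ c) (hsum : ∑ i, hρ.eigenvalues i = 1) :
    -logb 2 c ≤ Sp p ρ := by
  rw [Sp, specVals, dif_pos hρ]
  split_ifs with hp1
  · exact neg_logb_le_sum_neg_mul_logb one_lt_two h0 hc hsum
  · exact neg_logb_le_renyi one_lt_two hp hp1 h0 hc hsum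

end Entropy

theorem ptraceA_outer {α β : Type*} [Fintype α] [Fintype β] (ψ : α × β → ℂ) :
    ptraceA (outer ψ) = (of (Function.curry ψ))ᵀ * (of (Function.curry ψ))ᵀᴴ := by
  ext j j'
  simp [ptraceA, outer, mul_apply]

theorem swapMat_mulVec {d : ℕ} (ψ : Fin d × Fin d → ℂ) (x : Fin d × Fin d) :
    (swapMat d *ᵥ ψ) x = ψ x.swap := by
  have hswap (y : Fin d × Fin d) : (x.1 = y.2 ∧ x.2 = y.1) ↔ x.swap = y := by
    rw [Prod.ext_iff, Prod.fst_swap, Prod.snd_swap, and_comm, eq_comm, @eq_comm _ x.1]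
  simp only [mulVec, dotProduct, swapMat, hswap, ite_mul, one_mul, zero_mul,
    Finset.sum_ite_eq, Finset.mem_univ, if_true]

theorem transpose_of_curry_eq_neg {d : ℕ} {ψ : Fin d × Fin d → ℂ} (h : Pa d *ᵥ ψ = ψ) :
    (of (Function.curry ψ))ᵀ = -of (Function.curry ψ) := by
  ext i j
  have hx := congrFun h (j, i)
  simp only [Pa, smul_mulVec, sub_mulVec, one_mulVec, Pi.smul_apply, Pi.sub_apply, smul_eq_mul,
    swapMat_mulVec] at hx
  simp only [transpose_apply, of_apply, Function.curry_apply, Matrix.neg_apply,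
    Prod.swap_prod_mk] at hx ⊢
  linear_combination -2 * hx

theorem stmt2_general (d : ℕ) (ψ : Fin d × Fin d → ℂ)
    (hψ : ∑ x, ‖ψ x‖ ^ 2 = 1) (hanti : (Pa d).mulVec ψ = ψ)
    (p : ℝ) (hp : 0 < p) :
    1 ≤ Sp p (ptraceA (outer ψ)) := by
  set C := of (Function.curry ψ)
  have hC : Cᵀ = -C := transpose_of_curry_eq_neg hanti
  have hρ : ptraceA (outer ψ) = C * Cᴴ := by
    rw [ptraceA_outer, hC, neg_mul, conjTranspose_neg, mul_neg, neg_neg]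
  have hnorm : ∑ i, ∑ j, ‖C i j‖ ^ 2 = 1 := by rw [← hψ, Fintype.sum_prod_type]; rfl
  have hpsd := posSemidef_self_mul_conjTranspose C
  have hsum : ∑ k, hpsd.isHermitian.eigenvalues k = 1 := by
    have htr := hpsd.isHermitian.trace_eq_sum_eigenvalues
    rw [trace_mul_conjTranspose_self, hnorm] at htr
    exact_mod_cast htr.symm
  have hhalf (k : Fin d) : hpsd.isHermitian.eigenvalues k ≤ 1 / 2 := by
    linarith [two_mul_eigenvalues_mul_conjTranspose_self_le hC hpsd.isHermitian k]
  have hbound := neg_logb_le_Sp hpsd.isHermitian hp hpsd.eigenvalues_nonneg hhalf hsum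
  rwa [one_div, logb_inv, logb_self_eq_one one_lt_two, neg_neg, ← hρ] at hbound

/-- every unit vector of the antisymmetric subspace of `ℂ^d ⊗ ℂ^d`
(`d ≥ 2`) has Rényi entropy of its reduction at least `1`, for every `p > 0`
(including the von Neumann case `p = 1`). -/
theorem stmt2 (d : ℕ) (hd : 2 ≤ d) (ψ : Fin d × Fin d → ℂ)
    (hψ : ∑ x, ‖ψ x‖ ^ 2 = 1) (hanti : (Pa d).mulVec ψ = ψ)
    (p : ℝ) (hp : 0 < p) :
    1 ≤ Sp p (ptraceA (outer ψ)) :=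
  stmt2_general d ψ hψ hanti p hp
end
end

section
/- Let P be a rank-k orthogonal projector on ℂ^{d_A} ⊗ ℂ^{d_B} with k ≤ d_A·d_B. Then the largest squared Schmidt coefficient of the unit vector ψ^+(P) across the cut AA':BB' satisfies λ_max ≥ k/(d_A·d_B). -/
open scoped BigOperators
open Matrix Kronecker

noncomputable section

/-!
Test `ρ = Tr_{AA'} |Ψ⟩⟨Ψ|` against the unnormalised maximally entangled vector
`Φ = ∑_b |b b⟩` on `BB'`, for which `⟨Φ|Φ⟩ = d_B`, so that `⟨Φ|ρ|Φ⟩ ≤ λ_max d_B`.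
On the other hand `⟨Φ|ρ|Φ⟩ = ∑_{a,a'} |T_{a a'}|²` with `T_{a a'} = ∑_b Ψ_{(a a'),(b b)}`,
and the diagonal of `T` sums to `Tr P / √k = √k`; Cauchy–Schwarz over that diagonal gives
`⟨Φ|ρ|Φ⟩ ≥ k / d_A`.
-/

lemma re_star_dotProduct_diagonal_mulVec {n : Type*} [Fintype n] [DecidableEq n]
    (d : n → ℝ) (v : n → ℂ) :
    (star v ⬝ᵥ (diagonal (RCLike.ofReal ∘ d) *ᵥ v)).re = ∑ i, d i * Complex.normSq (v i) := by
  simp only [dotProduct, mulVec_diagonal, Complex.re_sum, Pi.star_apply, Function.comp_apply]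
  refine Finset.sum_congr rfl fun i _ => ?_
  rw [mul_left_comm, Complex.star_def, ← Complex.normSq_eq_conj_mul_self]
  exact Complex.re_ofReal_mul _ _

lemma re_star_dotProduct_self {n : Type*} [Fintype n] (v : n → ℂ) :
    (star v ⬝ᵥ v).re = ∑ i, Complex.normSq (v i) := by
  simp only [dotProduct, Complex.re_sum, Pi.star_apply]
  refine Finset.sum_congr rfl fun i _ => ?_
  rw [Complex.star_def, mul_comm, Complex.mul_conj, Complex.ofReal_re]

lemma eigenvalues_le_lambdaMax {n : Type*} [Fintype n] [DecidableEq n] {ρ : Matrix n n ℂ}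
    (hρ : ρ.IsHermitian) (i : n) : hρ.eigenvalues i ≤ lambdaMax ρ := by
  simpa only [lambdaMax, specVals, dif_pos hρ] using
    le_ciSup (Set.finite_range (specVals ρ)).bddAbove i

lemma re_star_dotProduct_mulVec_le_lambdaMax {n : Type*} [Fintype n] [DecidableEq n]
    {ρ : Matrix n n ℂ} (hρ : ρ.IsHermitian) (Φ : n → ℂ) :
    (star Φ ⬝ᵥ (ρ *ᵥ Φ)).re ≤ lambdaMax ρ * (star Φ ⬝ᵥ Φ).re := by
  set U : Matrix n n ℂ := ↑hρ.eigenvectorUnitary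
  set v := star U *ᵥ Φ
  have hstar_v : star v = star Φ ᵥ* U := by
    rw [star_mulVec, star_eq_conjTranspose, conjTranspose_conjTranspose]
  have hUU : U * star U = 1 := Unitary.mul_star_self_of_mem hρ.eigenvectorUnitary.2
  have hquad : star Φ ⬝ᵥ (ρ *ᵥ Φ)
      = star v ⬝ᵥ (diagonal (RCLike.ofReal ∘ hρ.eigenvalues) *ᵥ v) := by
    conv_lhs => rw [hρ.spectral_theorem, Unitary.conjStarAlgAut_apply]
    rw [hstar_v, ← dotProduct_mulVec, mulVec_mulVec, mulVec_mulVec, mul_assoc]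
  have hnorm : star Φ ⬝ᵥ Φ = star v ⬝ᵥ v := by
    rw [hstar_v, ← dotProduct_mulVec, mulVec_mulVec, hUU, one_mulVec]
  rw [hquad, hnorm, re_star_dotProduct_diagonal_mulVec, re_star_dotProduct_self, Finset.mul_sum]
  exact Finset.sum_le_sum fun i _ =>
    mul_le_mul_of_nonneg_right (eigenvalues_le_lambdaMax hρ i) (Complex.normSq_nonneg _)

section PartialTrace

variable {α β : Type*} [Fintype α] [Fintype β]

lemma isHermitian_ptraceA_outer (Ψ : α × β → ℂ) : (ptraceA (outer Ψ)).IsHermitian := by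
  ext j j'
  simp only [conjTranspose_apply, ptraceA, outer, star_sum, star_mul', Complex.star_def,
    Complex.conj_conj, mul_comm]

lemma star_dotProduct_ptraceA_outer_mulVec_s3 (Ψ : α × β → ℂ) (Φ : β → ℂ) :
    star Φ ⬝ᵥ (ptraceA (outer Ψ) *ᵥ Φ)
      = ((∑ a, Complex.normSq (∑ b, Ψ (a, b) * star (Φ b)) : ℝ) : ℂ) := by
  simp only [dotProduct, mulVec, ptraceA, outer, Pi.star_apply, Complex.ofReal_sum,
    Complex.normSq_eq_conj_mul_self, map_sum, map_mul, Complex.star_def, Complex.conj_conj,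
    Finset.sum_mul, Finset.mul_sum]
  conv_lhs => enter [2, b]; rw [Finset.sum_comm]
  rw [Finset.sum_comm]
  refine Finset.sum_congr rfl fun a _ => ?_
  refine Finset.sum_congr rfl fun b _ => Finset.sum_congr rfl fun b' _ => ?_
  ring

end PartialTrace

lemma normSq_sum_diag_le_card_mul {α : Type*} [Fintype α] (f : α × α → ℂ) :
    Complex.normSq (∑ a, f (a, a)) ≤ Fintype.card α * ∑ p, Complex.normSq (f p) := by
  have hdiag : ∑ a, Complex.normSq (f (a, a)) ≤ ∑ p, Complex.normSq (f p) := by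
    rw [Fintype.sum_prod_type]
    exact Finset.sum_le_sum fun a _ =>
      Finset.single_le_sum (f := fun b => Complex.normSq (f (a, b)))
        (fun _ _ => Complex.normSq_nonneg _) (Finset.mem_univ a)
  calc Complex.normSq (∑ a, f (a, a)) = ‖∑ a, f (a, a)‖ ^ 2 := Complex.normSq_eq_norm_sq _
    _ ≤ (∑ a, ‖f (a, a)‖) ^ 2 := pow_le_pow_left₀ (norm_nonneg _) (norm_sum_le _ _) 2
    _ ≤ Fintype.card α * ∑ a, ‖f (a, a)‖ ^ 2 := sq_sum_le_card_mul_sum_sq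
    _ = Fintype.card α * ∑ a, Complex.normSq (f (a, a)) := by
      simp only [Complex.normSq_eq_norm_sq]
    _ ≤ Fintype.card α * ∑ p, Complex.normSq (f p) := by gcongr

lemma sum_diag_regroup {α β : Type*} [Fintype α] [Fintype β] (F : (α × β) × (α × β) → ℂ) :
    ∑ a, ∑ b, regroup F ((a, a), (b, b)) = ∑ x, F (x, x) :=
  (Fintype.sum_prod_type fun x : α × β => F (x, x)).symm

lemma sum_sum_mul_conj_eq_card_of_orthonormal {k : ℕ} {ι : Type*} [Fintype ι] (ψ : Fin k → ι → ℂ)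
    (hON : ∀ i j, star (ψ i) ⬝ᵥ ψ j = if i = j then 1 else 0) :
    ∑ x, ∑ i, ψ i x * starRingEnd ℂ (ψ i x) = k := by
  rw [Finset.sum_comm]
  have hunit : ∀ i, ∑ x, ψ i x * starRingEnd ℂ (ψ i x) = 1 := fun i => by
    simpa [dotProduct, mul_comm] using hON i i
  simp [hunit]

lemma sum_mul_star_one_apply {β : Type*} [Fintype β] [DecidableEq β] (f : β × β → ℂ) :
    ∑ q : β × β, f q * star ((1 : Matrix β β ℂ) q.1 q.2) = ∑ b, f (b, b) := by
  simp [Fintype.sum_prod_type, one_apply]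

theorem stmt3_general (dA dB k : ℕ)
    (ψ : Fin k → (Fin dA × Fin dB → ℂ))
    (hON : ∀ i j, star (ψ i) ⬝ᵥ ψ j = if i = j then 1 else 0)
    (Ψ : (Fin dA × Fin dA) × (Fin dB × Fin dB) → ℂ)
    (hΨ : Ψ = regroup (fun x : (Fin dA × Fin dB) × (Fin dA × Fin dB) =>
      ((1 / Real.sqrt k : ℝ) : ℂ) * ∑ i, ψ i x.1 * (starRingEnd ℂ) (ψ i x.2))) :
    (k : ℝ) / (dA * dB) ≤ lambdaMax (ptraceA (outer Ψ)) := by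
  rcases Nat.eq_zero_or_pos dB with rfl | hdB
  · -- both sides are junk `0`: a division by zero and a supremum over an empty index type
    simp [lambdaMax]
  set T : Fin dA × Fin dA → ℂ := fun p => ∑ b, Ψ (p, (b, b))
  set Φ : Fin dB × Fin dB → ℂ := fun q => (1 : Matrix (Fin dB) (Fin dB) ℂ) q.1 q.2
  have htrace : ∑ a, T (a, a) = (√k : ℝ) := by
    simp only [T, hΨ, sum_diag_regroup, ← Finset.mul_sum, sum_sum_mul_conj_eq_card_of_orthonormal ψ hON]
    rw [← Complex.ofReal_natCast, ← Complex.ofReal_mul, one_div_mul_eq_div, Real.div_sqrt]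
  have hquad : (star Φ ⬝ᵥ (ptraceA (outer Ψ) *ᵥ Φ)).re = ∑ p, Complex.normSq (T p) := by
    rw [star_dotProduct_ptraceA_outer_mulVec_s3, Complex.ofReal_re]
    simp only [Φ, sum_mul_star_one_apply, T]
  have hnorm : (star Φ ⬝ᵥ Φ).re = dB := by
    simp [dotProduct, Φ, Fintype.sum_prod_type, one_apply]
  have hCS : (k : ℝ) / dA ≤ ∑ p, Complex.normSq (T p) := by
    have := normSq_sum_diag_le_card_mul T
    rw [htrace, Complex.normSq_ofReal, Real.mul_self_sqrt (Nat.cast_nonneg k),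
      Fintype.card_fin] at this
    exact div_le_of_le_mul₀ (Nat.cast_nonneg _)
      (Finset.sum_nonneg fun p _ => Complex.normSq_nonneg _) (by linarith)
  rw [← div_div, div_le_iff₀ (by exact_mod_cast hdB)]
  calc (k : ℝ) / dA ≤ ∑ p, Complex.normSq (T p) := hCS
    _ = (star Φ ⬝ᵥ (ptraceA (outer Ψ) *ᵥ Φ)).re := hquad.symm
    _ ≤ lambdaMax (ptraceA (outer Ψ)) * (star Φ ⬝ᵥ Φ).re :=
      re_star_dotProduct_mulVec_le_lambdaMax (isHermitian_ptraceA_outer Ψ) Φ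
    _ = lambdaMax (ptraceA (outer Ψ)) * dB := by rw [hnorm]

/-- Hayden's lemma: for a rank-`k` projector
`P = ∑ᵢ |ψᵢ⟩⟨ψᵢ|` on `ℂ^{d_A} ⊗ ℂ^{d_B}` with `k ≤ d_A d_B`, the vector
`ψ⁺(P) = k^{-1/2} ∑ᵢ ψᵢ ⊗ ψᵢ*` has largest squared Schmidt coefficient across
the cut `AA' : BB'` at least `k/(d_A d_B)`. -/
theorem stmt3 (dA dB k : ℕ) (hk : 1 ≤ k) (hkle : k ≤ dA * dB)
    (ψ : Fin k → (Fin dA × Fin dB → ℂ))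
    (hON : ∀ i j, star (ψ i) ⬝ᵥ ψ j = if i = j then 1 else 0)
    (Ψ : (Fin dA × Fin dA) × (Fin dB × Fin dB) → ℂ)
    (hΨ : Ψ = regroup (fun x : (Fin dA × Fin dB) × (Fin dA × Fin dB) =>
      ((1 / Real.sqrt k : ℝ) : ℂ) * ∑ i, ψ i x.1 * (starRingEnd ℂ) (ψ i x.2))) :
    (k : ℝ) / (dA * dB) ≤ lambdaMax (ptraceA (outer Ψ)) :=
  stmt3_general dA dB k ψ hON Ψ hΨ
end
end

section
/- For every integer d ≥ 2, the unit vector ψ^+(P_a) built from the antisymmetric projector P_a on ℂ^d ⊗ ℂ^d has largest squared Schmidt coefficient across the cut AA':BB' at least (d−1)/(2d), and consequently for every real p > 1 its reduced density matrix ρ_{BB'} across that cut satisfies S_p(ρ_{BB'}) ≤ (p/(p−1))·log₂(2d/(d−1)). -/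
open scoped BigOperators
open Matrix Kronecker

noncomputable section

/-! Both partial traces of `P_a` equal `((d - 1) / 2) • 1`. Hence the (unnormalised) maximally
entangled vector `Ω = ∑_b |b b⟩` on `BB'` is an eigenvector of
`ρ_{BB'} = Tr_{AA'} |ψ⁺⟩⟨ψ⁺|` with eigenvalue `c² ((d - 1) / 2)²`, where `c² = 2 / (d (d - 1))`
is the normalisation; this equals `(d - 1) / (2d)`. So `λ_max(ρ_{BB'}) ≥ (d - 1) / (2d)`, and the
Rényi bound follows from `Tr ρ^p ≥ λ_max^p`. -/

open scoped ComplexOrder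

section PartialTrace

variable {α β : Type*}

def ptraceB [Fintype β] (M : Matrix (α × β) (α × β) ℂ) : Matrix α α ℂ :=
  fun i i' => ∑ j, M (i, j) (i', j)

theorem ptraceA_smul [Fintype α] (c : ℂ) (M : Matrix (α × β) (α × β) ℂ) :
    ptraceA (c • M) = c • ptraceA M := by
  ext j j'
  simp [ptraceA, Finset.mul_sum]

theorem ptraceB_smul [Fintype β] (c : ℂ) (M : Matrix (α × β) (α × β) ℂ) :
    ptraceB (c • M) = c • ptraceB M := by
  ext i i'
  simp [ptraceB, Finset.mul_sum]

theorem ptraceA_outer_eq_conjTranspose_mul_self [Fintype α] [Fintype β] (Ψ : α × β → ℂ) :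
    ptraceA (outer Ψ) =
      (Matrix.of fun i j => star (Ψ (i, j)))ᴴ * Matrix.of fun i j => star (Ψ (i, j)) := by
  ext j j'
  simp [ptraceA, outer, Matrix.mul_apply]

theorem posSemidef_ptraceA_outer [Fintype α] [Fintype β] (Ψ : α × β → ℂ) :
    (ptraceA (outer Ψ)).PosSemidef := by
  rw [ptraceA_outer_eq_conjTranspose_mul_self]
  exact Matrix.posSemidef_conjTranspose_mul_self _

def maxEnt (α : Type*) [DecidableEq α] : α × α → ℂ := fun x => if x.1 = x.2 then 1 else 0

theorem maxEnt_ne_zero [DecidableEq α] [Nonempty α] : maxEnt α ≠ 0 := by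
  obtain ⟨a⟩ := ‹Nonempty α›
  exact Function.ne_iff.mpr ⟨(a, a), by simp [maxEnt]⟩

theorem ptraceA_outer_regroup_mulVec_maxEnt [Fintype α] [Fintype β] [DecidableEq α]
    [DecidableEq β] {M : Matrix (α × β) (α × β) ℂ} {s t : ℂ}
    (hA : ptraceA M = s • 1) (hB : ptraceB M = t • 1) :
    ptraceA (outer (regroup fun x => M x.1 x.2)) *ᵥ maxEnt β = (s * star t) • maxEnt β := by
  ext ⟨b, b'⟩
  have hB' : ∀ a a', ∑ e, M (a, e) (a', e) = if a = a' then t else 0 := fun a a' => by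
    simpa [ptraceB, Matrix.one_apply] using congrFun (congrFun hB a) a'
  have hA' : ∑ a, M (a, b) (a, b') = if b = b' then s else 0 := by
    simpa [ptraceA, Matrix.one_apply] using congrFun (congrFun hA b) b'
  calc _ = ∑ a, ∑ a', M (a, b) (a', b') * star (∑ e, M (a, e) (a', e)) := by
        simp [mulVec, dotProduct, ptraceA, outer, regroup, maxEnt, Fintype.sum_prod_type,
          Finset.mul_sum, Finset.sum_comm (γ := β)]
    _ = (∑ a, M (a, b) (a, b')) * star t := by
        simp [hB', apply_ite star, Finset.sum_mul]
    _ = _ := by simp [hA', maxEnt]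

end PartialTrace

theorem sum_swapMat_apply_fst (d : ℕ) (b b' : Fin d) :
    ∑ a, swapMat d (a, b) (a, b') = if b = b' then 1 else 0 := by
  rw [Fintype.sum_eq_single b' fun a ha => by simp [swapMat, ha]]
  simp [swapMat]

theorem sum_swapMat_apply_snd (d : ℕ) (a a' : Fin d) :
    ∑ b, swapMat d (a, b) (a', b) = if a = a' then 1 else 0 := by
  rw [Fintype.sum_eq_single a fun b hb => by simp [swapMat, Ne.symm hb]]
  simp [swapMat]

theorem ptraceA_Pa (d : ℕ) : ptraceA (Pa d) = (((d : ℂ) - 1) / 2) • 1 := by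
  ext b b'
  simp only [ptraceA, Pa, Matrix.smul_apply, Matrix.sub_apply, smul_eq_mul, ← Finset.mul_sum,
    Finset.sum_sub_distrib, sum_swapMat_apply_fst, one_apply]
  split_ifs <;> simp_all [div_eq_inv_mul]

theorem ptraceB_Pa (d : ℕ) : ptraceB (Pa d) = (((d : ℂ) - 1) / 2) • 1 := by
  ext a a'
  simp only [ptraceB, Pa, Matrix.smul_apply, Matrix.sub_apply, smul_eq_mul, ← Finset.mul_sum,
    Finset.sum_sub_distrib, sum_swapMat_apply_snd, one_apply]
  split_ifs <;> simp_all [div_eq_inv_mul]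

section Spectral

variable {n : Type*} [Fintype n] [DecidableEq n]

theorem Matrix.IsHermitian.exists_eigenvalues_eq_of_mulVec_eq {A : Matrix n n ℂ}
    (hA : A.IsHermitian) {v : n → ℂ} (hv : v ≠ 0) {μ : ℝ} (hAv : A *ᵥ v = (μ : ℂ) • v) :
    ∃ i, hA.eigenvalues i = μ := by
  have hμ : μ ∈ spectrum ℝ A := by
    rw [spectrum.mem_iff, Matrix.isUnit_iff_isUnit_det, isUnit_iff_ne_zero, not_not,
      ← Matrix.exists_mulVec_eq_zero_iff]
    refine ⟨v, hv, ?_⟩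
    rw [sub_mulVec, hAv, Algebra.algebraMap_eq_smul_one, smul_mulVec, one_mulVec,
      Complex.coe_smul]
    exact sub_self _
  simpa [hA.spectrum_real_eq_range_eigenvalues] using hμ

theorem specVals_of_isHermitian {A : Matrix n n ℂ} (hA : A.IsHermitian) :
    specVals A = hA.eigenvalues :=
  dif_pos hA

theorem le_lambdaMax_of_mulVec_eq {A : Matrix n n ℂ} (hA : A.IsHermitian) {v : n → ℂ}
    (hv : v ≠ 0) {μ : ℝ} (hAv : A *ᵥ v = (μ : ℂ) • v) : μ ≤ lambdaMax A := by
  obtain ⟨i, rfl⟩ := hA.exists_eigenvalues_eq_of_mulVec_eq hv hAv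
  rw [lambdaMax, specVals_of_isHermitian hA]
  exact le_ciSup (Finite.bddAbove_range _) i

-- Positivity rules out an empty index type, where `lambdaMax` is the junk value `sSup ∅ = 0`.
theorem exists_lambdaMax_eq_eigenvalues {A : Matrix n n ℂ} (hA : A.IsHermitian)
    (h : 0 < lambdaMax A) : ∃ i, lambdaMax A = hA.eigenvalues i := by
  have : Nonempty n := by
    by_contra hn
    rw [not_nonempty_iff] at hn
    simp [lambdaMax] at h
  obtain ⟨i, hi⟩ := exists_eq_ciSup_of_finite (f := hA.eigenvalues)
  exact ⟨i, by rw [lambdaMax, specVals_of_isHermitian hA, hi]⟩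

theorem Sp_le_of_le_lambdaMax {ρ : Matrix n n ℂ} (hρ : ρ.PosSemidef) {t p : ℝ} (ht : 0 < t)
    (htρ : t ≤ lambdaMax ρ) (hp : 1 < p) :
    Sp p ρ ≤ p / (p - 1) * Real.logb 2 t⁻¹ := by
  obtain ⟨i, hi⟩ := exists_lambdaMax_eq_eigenvalues hρ.1 (ht.trans_le htρ)
  have hsum : t ^ p ≤ ∑ j, hρ.1.eigenvalues j ^ p :=
    calc t ^ p ≤ hρ.1.eigenvalues i ^ p := Real.rpow_le_rpow ht.le (hi ▸ htρ) (by linarith)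
      _ ≤ _ := Finset.single_le_sum
          (fun j _ => Real.rpow_nonneg (hρ.eigenvalues_nonneg j) p) (Finset.mem_univ i)
  have hlog : p * Real.logb 2 t ≤ Real.logb 2 (∑ j, hρ.1.eigenvalues j ^ p) := by
    rw [← Real.logb_rpow_eq_mul_logb_of_pos ht]
    exact Real.logb_le_logb_of_le one_lt_two (by positivity) hsum
  rw [Sp, if_neg hp.ne', specVals_of_isHermitian hρ.1, Real.logb_inv]
  calc 1 / (1 - p) * Real.logb 2 (∑ j, hρ.1.eigenvalues j ^ p)
      ≤ 1 / (1 - p) * (p * Real.logb 2 t) :=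
        mul_le_mul_of_nonpos_left hlog (by rw [one_div_nonpos]; linarith)
    _ = p / (p - 1) * -Real.logb 2 t := by
        have : 1 - p ≠ 0 := by linarith
        have : p - 1 ≠ 0 := by linarith
        field_simp
        ring

end Spectral

theorem one_div_sqrt_choose_two_sq (d : ℕ) :
    (1 / Real.sqrt (d * (d - 1) / 2 : ℕ)) ^ 2 = 2 / (d * ((d : ℝ) - 1)) := by
  rw [div_pow, one_pow, Real.sq_sqrt (Nat.cast_nonneg _), ← Nat.choose_two_right,
    Nat.cast_choose_two, one_div_div]

theorem ptraceA_outer_regroup_Pa_mulVec_maxEnt (d : ℕ) (c : ℝ) :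
    ptraceA (outer (regroup fun x => (c : ℂ) * Pa d x.1 x.2)) *ᵥ maxEnt (Fin d) =
      (((c * ((d : ℝ) - 1) / 2) ^ 2 : ℝ) : ℂ) • maxEnt (Fin d) := by
  have hs : (c : ℂ) * (((d : ℂ) - 1) / 2) = ((c * ((d : ℝ) - 1) / 2 : ℝ) : ℂ) := by
    push_cast
    ring
  have hA : ptraceA ((c : ℂ) • Pa d) = ((c * ((d : ℝ) - 1) / 2 : ℝ) : ℂ) • 1 := by
    rw [ptraceA_smul, ptraceA_Pa, smul_smul, hs]
  have hB : ptraceB ((c : ℂ) • Pa d) = ((c * ((d : ℝ) - 1) / 2 : ℝ) : ℂ) • 1 := by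
    rw [ptraceB_smul, ptraceB_Pa, smul_smul, hs]
  simpa only [Matrix.smul_apply, smul_eq_mul, Complex.star_def, Complex.conj_ofReal,
    ← Complex.ofReal_mul, ← sq, Complex.ofReal_pow] using
    ptraceA_outer_regroup_mulVec_maxEnt hA hB

/-- for `d ≥ 2`, the vector `ψ⁺(P_a)` built from the antisymmetric
projector `P_a` (of rank `d(d-1)/2`) has largest squared Schmidt coefficient
across the cut `AA' : BB'` at least `(d-1)/(2d)`; consequently, for every
`p > 1`, `S_p(ρ_{BB'}) ≤ (p/(p-1)) log₂(2d/(d-1))`. -/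
theorem stmt8 (d : ℕ) (hd : 2 ≤ d)
    (Ψ : (Fin d × Fin d) × (Fin d × Fin d) → ℂ)
    (hΨ : Ψ = regroup (fun x : (Fin d × Fin d) × (Fin d × Fin d) =>
      ((1 / Real.sqrt (d * (d - 1) / 2 : ℕ) : ℝ) : ℂ) * Pa d x.1 x.2)) :
    ((d : ℝ) - 1) / (2 * d) ≤ lambdaMax (ptraceA (outer Ψ)) ∧
      ∀ p : ℝ, 1 < p →
        Sp p (ptraceA (outer Ψ)) ≤
          (p / (p - 1)) * Real.logb 2 (2 * d / ((d : ℝ) - 1)) := by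
  have hd1 : (1 : ℝ) < d := by exact_mod_cast hd
  have heig : (1 / Real.sqrt (d * (d - 1) / 2 : ℕ) * ((d : ℝ) - 1) / 2) ^ 2 =
      ((d : ℝ) - 1) / (2 * d) := by
    rw [mul_div_assoc, mul_pow, one_div_sqrt_choose_two_sq]
    field_simp
  have hρΩ : ptraceA (outer Ψ) *ᵥ maxEnt (Fin d) =
      ((((d : ℝ) - 1) / (2 * d) : ℝ) : ℂ) • maxEnt (Fin d) := by
    rw [hΨ, ← heig]
    exact ptraceA_outer_regroup_Pa_mulVec_maxEnt d _
  have hρ := posSemidef_ptraceA_outer Ψ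
  have : Nonempty (Fin d) := ⟨⟨0, by omega⟩⟩
  have hmax := le_lambdaMax_of_mulVec_eq hρ.1 maxEnt_ne_zero hρΩ
  refine ⟨hmax, fun p hp => ?_⟩
  simpa [inv_div] using Sp_le_of_le_lambdaMax hρ (by positivity) hmax hp
end
end

section
/- Let ρ be a density matrix on an n-dimensional complex Hilbert space with n ≥ 2 and largest eigenvalue λ. Then the von Neumann entropy satisfies S(ρ) ≤ h(λ) + (1−λ)·log₂(n−1), where h(λ) = −λ log₂ λ − (1−λ) log₂(1−λ) is the binary entropy function. -/
/-!
Split the spectrum of `ρ` into the top eigenvalue `λ` and the other `n - 1` eigenvalues, which sum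
to `1 - λ`. By concavity of `η(x) = -x log x` (Jensen), the entropy of the latter is largest when
they are all equal to `(1 - λ)/(n - 1)`, and then it equals `η(1 - λ) + (1 - λ) log (n - 1)`;
adding `η(λ)` gives `h(λ) + (1 - λ) log (n - 1)`.
-/

open scoped BigOperators
open Matrix Kronecker

noncomputable section

open scoped ComplexOrder

open Real Finset

theorem Real.sum_negMulLog_le_mul_log_card_add {ι : Type*} (t : Finset ι) (p : ι → ℝ)
    (hp : ∀ i ∈ t, 0 ≤ p i) :
    ∑ i ∈ t, negMulLog (p i) ≤ (∑ i ∈ t, p i) * log #t + negMulLog (∑ i ∈ t, p i) := by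
  rcases t.eq_empty_or_nonempty with rfl | ht
  · simp
  have hcard : (0 : ℝ) < #t := by exact_mod_cast ht.card_pos
  have jensen := concaveOn_negMulLog.le_map_sum (t := t) (w := fun _ ↦ (#t : ℝ)⁻¹) (p := p)
    (fun _ _ ↦ by positivity) (by simp [hcard.ne']) hp
  simp only [smul_eq_mul, ← mul_sum] at jensen
  rw [mul_comm, negMulLog_mul, negMulLog, log_inv] at jensen
  calc ∑ i ∈ t, negMulLog (p i) = (∑ i ∈ t, negMulLog (p i)) * (#t : ℝ)⁻¹ * #t := by
        field_simp
    _ ≤ _ := mul_le_mul_of_nonneg_right jensen hcard.le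
    _ = _ := by field_simp

theorem Real.sum_negMulLog_le_binEntropy_add {ι : Type*} [Fintype ι] (p : ι → ℝ)
    (hp : ∀ i, 0 ≤ p i) (hsum : ∑ i, p i = 1) (j : ι) :
    ∑ i, negMulLog (p i) ≤ binEntropy (p j) + (1 - p j) * log (Fintype.card ι - 1) := by
  classical
  have hrest : ∑ i ∈ univ.erase j, p i = 1 - p j := by
    rw [← hsum, ← add_sum_erase _ _ (mem_univ j)]; ring
  have hcard : ((#(univ.erase j) : ℕ) : ℝ) = Fintype.card ι - 1 := by
    rw [card_erase_of_mem (mem_univ j), card_univ,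
      Nat.cast_pred (Fintype.card_pos_iff.mpr ⟨j⟩)]
  have := sum_negMulLog_le_mul_log_card_add (univ.erase j) p (fun i _ ↦ hp i)
  rw [hrest, hcard] at this
  rw [← add_sum_erase _ _ (mem_univ j), binEntropy_eq_negMulLog_add_negMulLog_one_sub]
  linarith

theorem binEnt_eq_binEntropy_div (x : ℝ) : binEnt x = binEntropy x / log 2 := by
  rw [binEnt, binEntropy_eq_negMulLog_add_negMulLog_one_sub, negMulLog, negMulLog, logb, logb]
  ring

theorem Sp_one_eq_sum_negMulLog_div {n : Type*} [Fintype n] [DecidableEq n] (ρ : Matrix n n ℂ) :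
    Sp 1 ρ = (∑ i, negMulLog (specVals ρ i)) / log 2 := by
  simp only [Sp, if_true, negMulLog, logb, sum_div]
  congr 1 with i
  ring

theorem Matrix.IsHermitian.specVals_eq {n : Type*} [Fintype n] [DecidableEq n]
    {ρ : Matrix n n ℂ} (hρ : ρ.IsHermitian) : specVals ρ = hρ.eigenvalues :=
  dif_pos hρ

theorem Matrix.PosSemidef.specVals_nonneg {n : Type*} [Fintype n] [DecidableEq n]
    {ρ : Matrix n n ℂ} (hρ : ρ.PosSemidef) (i : n) : 0 ≤ specVals ρ i := by
  rw [hρ.isHermitian.specVals_eq]; exact hρ.eigenvalues_nonneg i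

theorem Matrix.IsHermitian.trace_eq_sum_specVals {n : Type*} [Fintype n] [DecidableEq n]
    {ρ : Matrix n n ℂ} (hρ : ρ.IsHermitian) : ρ.trace = ((∑ i, specVals ρ i : ℝ) : ℂ) := by
  rw [hρ.trace_eq_sum_eigenvalues, hρ.specVals_eq]; push_cast; rfl

theorem stmt14_general (n : ℕ) (ρ : Matrix (Fin n) (Fin n) ℂ)
    (hρ : ρ.PosSemidef) (htr : ρ.trace = 1) :
    Sp 1 ρ ≤ binEnt (lambdaMax ρ) + (1 - lambdaMax ρ) * Real.logb 2 ((n : ℝ) - 1) := by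
  have hsum : ∑ i, specVals ρ i = 1 := by
    exact_mod_cast hρ.isHermitian.trace_eq_sum_specVals.symm.trans htr
  have : Nonempty (Fin n) := univ_nonempty_iff.mp (nonempty_of_sum_ne_zero (hsum ▸ one_ne_zero))
  obtain ⟨j, hj⟩ : ∃ j, specVals ρ j = lambdaMax ρ := exists_eq_ciSup_of_finite
  have hentropy := sum_negMulLog_le_binEntropy_add _ hρ.specVals_nonneg hsum j
  rw [Fintype.card_fin, hj] at hentropy
  rw [Sp_one_eq_sum_negMulLog_div, binEnt_eq_binEntropy_div, logb, mul_div_assoc', ← add_div]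
  exact div_le_div_of_nonneg_right hentropy (log_pos one_lt_two).le

/-- for a density matrix `ρ` on an `n`-dimensional space
(`n ≥ 2`) with largest eigenvalue `λ`, the von Neumann entropy satisfies
`S(ρ) ≤ h(λ) + (1-λ) log₂(n-1)`. -/
theorem stmt14 (n : ℕ) (hn : 2 ≤ n) (ρ : Matrix (Fin n) (Fin n) ℂ)
    (hρ : ρ.PosSemidef) (htr : ρ.trace = 1) :
    Sp 1 ρ ≤ binEnt (lambdaMax ρ) + (1 - lambdaMax ρ) * Real.logb 2 ((n : ℝ) - 1) :=
  stmt14_general n ρ hρ htr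
end
end

section
/- Let d ≥ 2 and let {ψ_i ⊗ φ_i}_{i=1}^{2d−1} be pairwise orthogonal product unit vectors in ℂ^d ⊗ ℂ^d such that for every subset S ⊆ {1,…,2d−1} with |S| ≥ d, both {ψ_i : i ∈ S} and {φ_i : i ∈ S} span ℂ^d. Then this set is an unextendible product basis: if a product vector a ⊗ b (a, b ∈ ℂ^d) is orthogonal to ψ_i ⊗ φ_i for all i, then a = 0 or b = 0. -/
open scoped BigOperators
open Matrix Kronecker

noncomputable section

/-! Each of the `2d - 1` orthogonality relations factors as
`⟨ψᵢ, a⟩ ⟨φᵢ, b⟩ = 0`, so every index kills `a` through `ψᵢ` or `b` through `φᵢ`.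
By pigeonhole one of the two happens for at least `d` indices; those `ψᵢ` (resp. `φᵢ`)
span `ℂ^d`, and a vector orthogonal to a spanning set vanishes. -/

lemma star_tensorVec_dotProduct_tensorVec {α β : Type*} [Fintype α] [Fintype β]
    (ψ a : α → ℂ) (φ b : β → ℂ) :
    star (tensorVec ψ φ) ⬝ᵥ tensorVec a b = (star ψ ⬝ᵥ a) * (star φ ⬝ᵥ b) := by
  simp only [dotProduct, tensorVec, Pi.star_apply, star_mul', Fintype.sum_mul_sum,
    Fintype.sum_prod_type]
  exact Finset.sum_congr rfl fun _ _ => Finset.sum_congr rfl fun _ _ => by ring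

lemma eq_zero_of_star_dotProduct_eq_zero_of_span_eq_top {n R : Type*} [Fintype n]
    [CommRing R] [StarRing R] [PartialOrder R] [StarOrderedRing R] [NoZeroDivisors R]
    {s : Set (n → R)} (hs : Submodule.span R s = ⊤) {a : n → R}
    (h : ∀ v ∈ s, star v ⬝ᵥ a = 0) : a = 0 := by
  have hker : LinearMap.ker (dotProductBilin R R (star a)) = ⊤ := by
    refine top_le_iff.mp (hs ▸ Submodule.span_le.mpr fun v hv => ?_)
    simp [star_dotProduct, h v hv]
  exact dotProduct_star_self_eq_zero.mp <| LinearMap.congr_fun (LinearMap.ker_eq_top.mp hker) a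

lemma le_card_filter_or_le_card_filter {ι : Type*} [Fintype ι] {p q : ι → Prop}
    [DecidablePred p] [DecidablePred q] (hpq : ∀ i, p i ∨ q i) {d : ℕ}
    (hcard : 2 * d - 1 ≤ Fintype.card ι) :
    d ≤ (Finset.univ.filter p).card ∨ d ≤ (Finset.univ.filter q).card := by
  classical
  have hcover : Finset.univ.filter p ∪ Finset.univ.filter q = Finset.univ := by
    rw [Finset.filter_union_right]
    exact Finset.filter_true_of_mem fun i _ => hpq i
  have := Finset.card_union_le (Finset.univ.filter p) (Finset.univ.filter q)
  rw [hcover, Finset.card_univ] at this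
  omega

theorem stmt16_general (d : ℕ)
    (ψ φ : Fin (2 * d - 1) → (Fin d → ℂ))
    (hspan : ∀ S : Finset (Fin (2 * d - 1)), d ≤ S.card →
      Submodule.span ℂ (ψ '' (S : Set (Fin (2 * d - 1)))) = ⊤ ∧
      Submodule.span ℂ (φ '' (S : Set (Fin (2 * d - 1)))) = ⊤)
    (a b : Fin d → ℂ)
    (horthab : ∀ i, star (tensorVec (ψ i) (φ i)) ⬝ᵥ tensorVec a b = 0) :
    a = 0 ∨ b = 0 := by
  classical
  have hkill : ∀ i, star (ψ i) ⬝ᵥ a = 0 ∨ star (φ i) ⬝ᵥ b = 0 := fun i =>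
    mul_eq_zero.mp (star_tensorVec_dotProduct_tensorVec (ψ i) a (φ i) b ▸ horthab i)
  rcases le_card_filter_or_le_card_filter (d := d) hkill (by simp) with hS | hT
  · open ComplexOrder in
    exact .inl <| eq_zero_of_star_dotProduct_eq_zero_of_span_eq_top (hspan _ hS).1 <|
      Set.forall_mem_image.mpr fun _ hi => (Finset.mem_filter.mp hi).2
  · open ComplexOrder in
    exact .inr <| eq_zero_of_star_dotProduct_eq_zero_of_span_eq_top (hspan _ hT).2 <|
      Set.forall_mem_image.mpr fun _ hi => (Finset.mem_filter.mp hi).2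

/-- `2d-1` pairwise orthogonal product unit vectors
`ψᵢ ⊗ φᵢ` in `ℂ^d ⊗ ℂ^d` such that every `d` of them have full local rank on
both sides form an unextendible product basis: any product vector orthogonal
to all of them has a vanishing factor. -/
theorem stmt16 (d : ℕ) (hd : 2 ≤ d)
    (ψ φ : Fin (2 * d - 1) → (Fin d → ℂ))
    (hunit : ∀ i, (∑ x, ‖ψ i x‖ ^ 2 = 1) ∧ (∑ x, ‖φ i x‖ ^ 2 = 1))
    (horth : ∀ i j, i ≠ j →
      star (tensorVec (ψ i) (φ i)) ⬝ᵥ tensorVec (ψ j) (φ j) = 0)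
    (hspan : ∀ S : Finset (Fin (2 * d - 1)), d ≤ S.card →
      Submodule.span ℂ (ψ '' (S : Set (Fin (2 * d - 1)))) = ⊤ ∧
      Submodule.span ℂ (φ '' (S : Set (Fin (2 * d - 1)))) = ⊤)
    (a b : Fin d → ℂ)
    (horthab : ∀ i, star (tensorVec (ψ i) (φ i)) ⬝ᵥ tensorVec a b = 0) :
    a = 0 ∨ b = 0 :=
  stmt16_general d ψ φ hspan a b horthab
end
end

section
/- Let d ≥ 2 and let {ψ_i ⊗ φ_i}_{i=1}^{2d−1} and {ψ'_j ⊗ φ'_j}_{j=1}^{2d−1} be two families of pairwise orthogonal product unit vectors in ℂ^d ⊗ ℂ^d, each with the property that for every subset S of indices with |S| ≥ d, both the first factors {ψ_i : i ∈ S} (resp. {ψ'_j : j ∈ S}) and the second factors {φ_i : i ∈ S} (resp. {φ'_j : j ∈ S}) span ℂ^d. Then the family {(ψ_i ⊗ ψ'_j) ⊗ (φ_i ⊗ φ'_j)}_{i,j=1}^{2d−1}, regarded as product vectors in (ℂ^d ⊗ ℂ^d)_{AA'} ⊗ (ℂ^d ⊗ ℂ^d)_{BB'}, is an unextendible product basis: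 any vector of the form a ⊗ b with a ∈ ℂ^d ⊗ ℂ^d, b ∈ ℂ^d ⊗ ℂ^d orthogonal to all (ψ_i ⊗ ψ'_j) ⊗ (φ_i ⊗ φ'_j) satisfies a = 0 or b = 0. -/
/-! Orthogonality to `(ψ i ⊗ ψ' j) ⊗ (φ i ⊗ φ' j)` factors as
`⟨ψ' j| (⟨ψ i| a) · ⟨φ' j| (⟨φ i| b) = 0` with partial inner products `⟨ψ i| a`. Since any `d`
of the `2d - 1` vectors `ψ i` span, a nonzero vector is annihilated by at most `d - 1` of them,
so a nonzero `a` has `⟨ψ i| a ≠ 0` for at least `d` indices `i`. For each such `i`, the same count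
for the `ψ' j` gives `d` indices `j` with `⟨φ' j| (⟨φ i| b) = 0`, whence `⟨φ i| b = 0`; holding for
`d` indices `i`, this forces `b = 0`. -/

open scoped BigOperators
open Matrix Kronecker

noncomputable section

open Finset

variable {ι n m : Type*} [Fintype n]

def SpansFromAny (f : ι → n → ℂ) (d : ℕ) : Prop :=
  ∀ S : Finset ι, d ≤ S.card → Submodule.span ℂ (f '' (S : Set ι)) = ⊤

/-- The partial inner product `(⟨u| ⊗ 1) c`. -/
def partialInner (u : n → ℂ) (c : n × m → ℂ) : m → ℂ :=
  fun y => star u ⬝ᵥ fun x => c (x, y)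

theorem star_tensorVec_dotProduct_tensorVec_s17 [Fintype m] (u a : n → ℂ) (v b : m → ℂ) :
    star (tensorVec u v) ⬝ᵥ tensorVec a b = (star u ⬝ᵥ a) * (star v ⬝ᵥ b) := by
  simp only [dotProduct, Finset.sum_mul_sum, Fintype.sum_prod_type, tensorVec,
    Pi.star_apply, star_mul']
  exact Finset.sum_congr rfl fun x _ => Finset.sum_congr rfl fun y _ => by ring

theorem star_tensorVec_dotProduct [Fintype m] (u : n → ℂ) (v : m → ℂ) (c : n × m → ℂ) :
    star (tensorVec u v) ⬝ᵥ c = star v ⬝ᵥ partialInner u c := by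
  simp only [dotProduct, partialInner, Fintype.sum_prod_type_right, tensorVec, Pi.star_apply,
    star_mul', Finset.mul_sum]
  exact Finset.sum_congr rfl fun y _ => Finset.sum_congr rfl fun x _ => by ring

open scoped ComplexOrder in
theorem eq_zero_of_forall_star_dotProduct_eq_zero {s : Set (n → ℂ)}
    (hs : Submodule.span ℂ s = ⊤) {u : n → ℂ} (h : ∀ v ∈ s, star v ⬝ᵥ u = 0) : u = 0 := by
  have hspan : ∀ v ∈ Submodule.span ℂ s, star v ⬝ᵥ u = 0 := by
    intro v hv
    induction hv using Submodule.span_induction with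
    | mem v hv => exact h v hv
    | zero => simp
    | add x y _ _ hx hy => rw [star_add, add_dotProduct, hx, hy, add_zero]
    | smul c x _ hx => rw [star_smul, smul_dotProduct, hx, smul_zero]
  exact dotProduct_star_self_eq_zero.mp (hspan u (hs ▸ Submodule.mem_top))

theorem le_card_filter_not_of_card_lt [Fintype ι] {d : ℕ} (hcard : 2 * d ≤ Fintype.card ι + 1)
    (p : ι → Prop) [DecidablePred p] (h : ∀ S : Finset ι, (∀ i ∈ S, p i) → S.card < d) :
    d ≤ #{i | ¬ p i} := by
  have hp := h (univ.filter p) fun i hi => (mem_filter.mp hi).2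
  have hsum := card_filter_add_card_filter_not (s := univ) p
  rw [card_univ] at hsum
  omega

namespace SpansFromAny

variable {f : ι → n → ℂ} {d : ℕ}

theorem eq_zero_of_star_dotProduct_eq_zero (hf : SpansFromAny f d) {S : Finset ι}
    (hS : d ≤ S.card) {u : n → ℂ} (h : ∀ i ∈ S, star (f i) ⬝ᵥ u = 0) : u = 0 :=
  eq_zero_of_forall_star_dotProduct_eq_zero (hf S hS) fun _ ⟨i, hi, hv⟩ => hv ▸ h i hi

theorem eq_zero_of_partialInner_eq_zero (hf : SpansFromAny f d) {S : Finset ι}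
    (hS : d ≤ S.card) {c : n × m → ℂ} (h : ∀ i ∈ S, partialInner (f i) c = 0) : c = 0 := by
  funext p
  have hcol : (fun x => c (x, p.2)) = 0 :=
    hf.eq_zero_of_star_dotProduct_eq_zero hS fun i hi => congrFun (h i hi) p.2
  exact congrFun hcol p.1

theorem le_card_star_dotProduct_ne_zero [Fintype ι] (hf : SpansFromAny f d)
    (hcard : 2 * d ≤ Fintype.card ι + 1) {u : n → ℂ} (hu : u ≠ 0) :
    d ≤ #{i | star (f i) ⬝ᵥ u ≠ 0} :=
  le_card_filter_not_of_card_lt hcard _ fun _ hS =>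
    lt_of_not_ge fun hd => hu (hf.eq_zero_of_star_dotProduct_eq_zero hd hS)

theorem le_card_partialInner_ne_zero [Fintype ι] [Fintype m] (hf : SpansFromAny f d)
    (hcard : 2 * d ≤ Fintype.card ι + 1) {c : n × m → ℂ} (hc : c ≠ 0) :
    d ≤ #{i | partialInner (f i) c ≠ 0} :=
  le_card_filter_not_of_card_lt hcard _ fun _ hS =>
    lt_of_not_ge fun hd => hc (hf.eq_zero_of_partialInner_eq_zero hd hS)

end SpansFromAny

theorem eq_zero_or_eq_zero_of_forall_star_tensorVec_dotProduct_eq_zero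
    {ι' n' m' : Type*} [Fintype m] [Fintype ι] [Fintype ι'] [Fintype n'] [Fintype m']
    {d d' : ℕ}
    {ψ : ι → n → ℂ} {φ : ι → m → ℂ} {ψ' : ι' → n' → ℂ} {φ' : ι' → m' → ℂ}
    (hψ : SpansFromAny ψ d) (hφ : SpansFromAny φ d) (hcard : 2 * d ≤ Fintype.card ι + 1)
    (hψ' : SpansFromAny ψ' d') (hφ' : SpansFromAny φ' d')
    (hcard' : 2 * d' ≤ Fintype.card ι' + 1) {a : n × n' → ℂ} {b : m × m' → ℂ}
    (hab : ∀ i j, star (tensorVec (tensorVec (ψ i) (ψ' j)) (tensorVec (φ i) (φ' j)))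
      ⬝ᵥ tensorVec a b = 0) :
    a = 0 ∨ b = 0 := by
  refine or_iff_not_imp_left.mpr fun ha => hφ.eq_zero_of_partialInner_eq_zero
    (hψ.le_card_partialInner_ne_zero hcard ha) fun i hi => ?_
  have hai : partialInner (ψ i) a ≠ 0 := (mem_filter.mp hi).2
  refine hφ'.eq_zero_of_star_dotProduct_eq_zero
    (hψ'.le_card_star_dotProduct_ne_zero hcard' hai) fun j hj => ?_
  have hprod := hab i j
  rw [star_tensorVec_dotProduct_tensorVec_s17, star_tensorVec_dotProduct (ψ i),
    star_tensorVec_dotProduct (φ i)] at hprod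
  exact (mul_eq_zero.mp hprod).resolve_left (mem_filter.mp hj).2

theorem stmt17_general (d : ℕ)
    (ψ φ ψ' φ' : Fin (2 * d - 1) → (Fin d → ℂ))
    (hspan : ∀ S : Finset (Fin (2 * d - 1)), d ≤ S.card →
      Submodule.span ℂ (ψ '' (S : Set (Fin (2 * d - 1)))) = ⊤ ∧
      Submodule.span ℂ (φ '' (S : Set (Fin (2 * d - 1)))) = ⊤)
    (hspan' : ∀ S : Finset (Fin (2 * d - 1)), d ≤ S.card →
      Submodule.span ℂ (ψ' '' (S : Set (Fin (2 * d - 1)))) = ⊤ ∧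
      Submodule.span ℂ (φ' '' (S : Set (Fin (2 * d - 1)))) = ⊤)
    (a b : Fin d × Fin d → ℂ)
    (horthab : ∀ i j,
      star (tensorVec (tensorVec (ψ i) (ψ' j)) (tensorVec (φ i) (φ' j)))
        ⬝ᵥ tensorVec a b = 0) :
    a = 0 ∨ b = 0 := by
  have hcard : 2 * d ≤ Fintype.card (Fin (2 * d - 1)) + 1 := by
    rw [Fintype.card_fin]; omega
  exact eq_zero_or_eq_zero_of_forall_star_tensorVec_dotProduct_eq_zero
    (fun S hS => (hspan S hS).1) (fun S hS => (hspan S hS).2) hcard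
    (fun S hS => (hspan' S hS).1) (fun S hS => (hspan' S hS).2) hcard horthab

/-- the tensor product of two families as in Statement 16 is
again an unextendible product basis with respect to the cut `AA' : BB'`. -/
theorem stmt17 (d : ℕ) (hd : 2 ≤ d)
    (ψ φ ψ' φ' : Fin (2 * d - 1) → (Fin d → ℂ))
    (hunit : ∀ i, (∑ x, ‖ψ i x‖ ^ 2 = 1) ∧ (∑ x, ‖φ i x‖ ^ 2 = 1))
    (hunit' : ∀ i, (∑ x, ‖ψ' i x‖ ^ 2 = 1) ∧ (∑ x, ‖φ' i x‖ ^ 2 = 1))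
    (horth : ∀ i j, i ≠ j →
      star (tensorVec (ψ i) (φ i)) ⬝ᵥ tensorVec (ψ j) (φ j) = 0)
    (horth' : ∀ i j, i ≠ j →
      star (tensorVec (ψ' i) (φ' i)) ⬝ᵥ tensorVec (ψ' j) (φ' j) = 0)
    (hspan : ∀ S : Finset (Fin (2 * d - 1)), d ≤ S.card →
      Submodule.span ℂ (ψ '' (S : Set (Fin (2 * d - 1)))) = ⊤ ∧
      Submodule.span ℂ (φ '' (S : Set (Fin (2 * d - 1)))) = ⊤)
    (hspan' : ∀ S : Finset (Fin (2 * d - 1)), d ≤ S.card →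
      Submodule.span ℂ (ψ' '' (S : Set (Fin (2 * d - 1)))) = ⊤ ∧
      Submodule.span ℂ (φ' '' (S : Set (Fin (2 * d - 1)))) = ⊤)
    (a b : Fin d × Fin d → ℂ)
    (horthab : ∀ i j,
      star (tensorVec (tensorVec (ψ i) (ψ' j)) (tensorVec (φ i) (φ' j)))
        ⬝ᵥ tensorVec a b = 0) :
    a = 0 ∨ b = 0 :=
  stmt17_general d ψ φ ψ' φ' hspan hspan' a b horthab
end
end

section
/- Let τ be a density matrix on ℂ^d ⊗ ℂ^d (a Choi–Jamiołkowski state) and define the associated channel on d×d density matrices by Λ(ρ) = d·Tr_A[(ρ^T ⊗ I_d)·τ], where ρ^T is the transpose in the standard basis and the partial trace is over the first tensor factor. If the orthogonal complement of the range of τ contains no nonzero product vector, then for every unit vector φ ∈ ℂ^d, the output Λ(|φ⟩⟨φ|) has rank d; equivalently, its Rényi-0 entropy S_0(Λ(|φ⟩⟨φ|)) = log₂ d. -/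
/-!
With `B x = φ̄ ⊗ x`, the output is `Λ(|φ⟩⟨φ|) = d · Bᴴ τ B`, so its quadratic form at `x` is
`d · ⟨φ̄ ⊗ x, τ (φ̄ ⊗ x)⟩`. Since `τ ≥ 0`, this vanishes only if `τ` annihilates the product
vector `φ̄ ⊗ x`, which the hypothesis excludes for `x ≠ 0`. Hence the output is positive definite,
so invertible, and has full rank `d`.
-/

open scoped BigOperators
open Matrix Kronecker

noncomputable section

open scoped ComplexOrder

theorem Matrix.PosSemidef.posDef_conjTranspose_mul_mul {𝕜 m n : Type*} [RCLike 𝕜]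
    [Fintype m] [Fintype n] {A : Matrix n n 𝕜} {B : Matrix n m 𝕜} (hA : A.PosSemidef)
    (hAB : ∀ x, x ≠ 0 → A *ᵥ (B *ᵥ x) ≠ 0) : (Bᴴ * A * B).PosDef := by
  refine .of_dotProduct_mulVec_pos (isHermitian_conjTranspose_mul_mul _ hA.1) fun x hx => ?_
  have hquad : star x ⬝ᵥ (Bᴴ * A * B) *ᵥ x = star (B *ᵥ x) ⬝ᵥ A *ᵥ (B *ᵥ x) := by
    simp only [star_mulVec, dotProduct_mulVec, vecMul_vecMul, mulVec_mulVec, Matrix.mul_assoc]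
  rw [hquad]
  exact (hA.dotProduct_mulVec_nonneg _).lt_of_ne' fun h0 =>
    hAB x hx ((hA.dotProduct_mulVec_zero_iff _).mp h0)

section ChoiOutput

variable {m n : Type*} [DecidableEq n]

def tensorLeftMat (ψ : m → ℂ) : Matrix (m × n) n ℂ :=
  fun p j => ψ p.1 * (1 : Matrix n n ℂ) p.2 j

theorem tensorLeftMat_mulVec [Fintype n] (ψ : m → ℂ) (x : n → ℂ) :
    tensorLeftMat ψ *ᵥ x = tensorVec ψ x := by
  funext p
  simp [tensorLeftMat, mulVec, dotProduct, tensorVec, Matrix.one_apply]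

theorem choiOutput_eq_smul_conjTranspose_mul_mul [Fintype m] [Fintype n]
    (τ : Matrix (m × n) (m × n) ℂ) (Φ : m → ℂ) :
    choiOutput τ Φ = (Fintype.card m : ℂ) •
      -- without `(n := n)` the products elaborate with `CStarMatrix` multiplication
      ((tensorLeftMat (n := n) (star Φ))ᴴ * τ * tensorLeftMat (n := n) (star Φ)) := by
  rw [choiOutput]
  congr 1
  ext j j'
  simp only [ptraceA, tensorLeftMat, outer, Matrix.mul_apply, kroneckerMap_apply, transpose_apply,
    conjTranspose_apply, Matrix.one_apply, Fintype.sum_prod_type, Finset.sum_mul, Pi.star_apply,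
    mul_ite, ite_mul, mul_one, mul_zero, zero_mul, Finset.sum_ite_eq, Finset.sum_ite_eq',
    Finset.mem_univ, if_true, apply_ite star, star_zero]
  exact Finset.sum_congr rfl fun _ _ => Finset.sum_congr rfl fun _ _ => by
    rw [Complex.star_def, Complex.conj_conj]; ring

theorem choiOutput_posDef [Fintype m] [Fintype n] {τ : Matrix (m × n) (m × n) ℂ}
    (hτ : τ.PosSemidef) (hτ_prod : ∀ a b, τ *ᵥ tensorVec a b = 0 → a = 0 ∨ b = 0)
    {Φ : m → ℂ} (hΦ : Φ ≠ 0) : (choiOutput τ Φ).PosDef := by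
  obtain ⟨i, -⟩ := Function.ne_iff.mp hΦ
  have hcard : (0 : ℂ) < Fintype.card m := by
    exact_mod_cast Fintype.card_pos_iff.mpr ⟨i⟩
  rw [choiOutput_eq_smul_conjTranspose_mul_mul]
  refine .smul (hτ.posDef_conjTranspose_mul_mul fun x hx h0 => ?_) hcard
  rw [tensorLeftMat_mulVec] at h0
  rcases hτ_prod _ _ h0 with h | h
  · exact hΦ (star_eq_zero.mp h)
  · exact hx h

end ChoiOutput

theorem stmt18_general (d : ℕ)
    (τ : Matrix (Fin d × Fin d) (Fin d × Fin d) ℂ)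
    (hpsd : τ.PosSemidef)
    (hnoprod : ∀ a b : Fin d → ℂ, τ.mulVec (tensorVec a b) = 0 → a = 0 ∨ b = 0)
    (φ : Fin d → ℂ) (hφ : ∑ i, ‖φ i‖ ^ 2 = 1) :
    (choiOutput τ φ).rank = d ∧
      Real.logb 2 ((choiOutput τ φ).rank) = Real.logb 2 d := by
  have hφ0 : φ ≠ 0 := by
    rintro rfl
    simp at hφ
  have hrank : (choiOutput τ φ).rank = d := by
    rw [rank_of_isUnit _ (choiOutput_posDef hpsd hnoprod hφ0).isUnit, Fintype.card_fin]
  exact ⟨hrank, by rw [hrank]⟩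

/-- if the orthogonal complement of the range of the
Choi–Jamiołkowski state `τ` (equivalently, the kernel of `τ`, since `τ ≥ 0`)
contains no nonzero product vector, then for every unit vector `φ` the output
`Λ(|φ⟩⟨φ|) = d·Tr_A[(|φ⟩⟨φ|^T ⊗ I)τ]` has rank `d`; equivalently its Rényi-0
entropy `log₂ rank` equals `log₂ d`. -/
theorem stmt18 (d : ℕ)
    (τ : Matrix (Fin d × Fin d) (Fin d × Fin d) ℂ)
    (hpsd : τ.PosSemidef) (htr : τ.trace = 1)
    (hnoprod : ∀ a b : Fin d → ℂ, τ.mulVec (tensorVec a b) = 0 → a = 0 ∨ b = 0)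
    (φ : Fin d → ℂ) (hφ : ∑ i, ‖φ i‖ ^ 2 = 1) :
    (choiOutput τ φ).rank = d ∧
      Real.logb 2 ((choiOutput τ φ).rank) = Real.logb 2 d :=
  stmt18_general d τ hpsd hnoprod φ hφ
end
end

section
/- Let d ≥ 2 and let {ψ_i ⊗ φ_i}_{i=1}^{2d−1} be pairwise orthogonal product unit vectors in ℂ^d ⊗ ℂ^d such that for every subset S of indices with |S| ≥ d, both {ψ_i : i ∈ S} and {φ_i : i ∈ S} span ℂ^d. Let τ = P_S/(2d−1), where P_S is the orthogonal projector onto the span of these vectors, and let Λ(ρ) = d·Tr_A[(ρ^T ⊗ I_d)·τ] be the associated entanglement-breaking channel. Then the minimal output Rényi-0 entropy is additive for two copies: S_0^min(Λ ⊗ Λ) = 2·log₂ d = 2·S_0^min(Λ); that is, for every unit vector Φ ∈ ℂ^{d²} the output (Λ ⊗ Λ)(|Φ⟩⟨Φ|) has full rank d². -/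
open scoped BigOperators
open Matrix Kronecker

noncomputable section

/-!
Up to a positive factor, the channel maps a pure input `Φ` to
`∑ₖ |Φ ⬝ᵥ ψₖ|² |φₖ⟩⟨φₖ|`, a positive semidefinite matrix whose range is spanned by the `φₖ`
with nonzero coefficient. If `Φ ≠ 0`, the `ψₖ` annihilated by `Φ` cannot span, so there are
fewer than `d` of them, and the remaining (at least `d`) indices carry `φₖ` that span `ℂ^d`.

For two copies, `Φ ⬝ᵥ (ψᵢ ⊗ ψⱼ) = yᵢ ⬝ᵥ ψⱼ` with `yᵢ = ψᵢ ᵥ* Φ`. The same counting applied to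
a nonzero column of `Φ` yields indices `i` with `yᵢ ≠ 0` whose `φᵢ` span, and applied to each
such `yᵢ` yields indices `j` whose `φⱼ` span; the products `φᵢ ⊗ φⱼ` then span `ℂ^d ⊗ ℂ^d`.
-/

section Spanning

variable {n ι : Type*}

lemma eq_zero_of_forall_dotProduct_eq_zero_of_span_eq_top [Fintype n] {v : ι → n → ℂ}
    {s : Set ι} (hv : Submodule.span ℂ (v '' s) = ⊤) {w : n → ℂ} (hw : ∀ i ∈ s, w ⬝ᵥ v i = 0) :
    w = 0 := by
  have h : dotProductBilin ℂ ℂ w = 0 :=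
    LinearMap.ext_on hv (by rintro _ ⟨i, hi, rfl⟩; exact hw i hi)
  exact dotProduct_eq_zero w fun u => LinearMap.congr_fun h u

lemma eq_zero_of_forall_star_dotProduct_eq_zero_of_span_eq_top [Fintype n] {v : ι → n → ℂ}
    {s : Set ι} (hv : Submodule.span ℂ (v '' s) = ⊤) {x : n → ℂ}
    (hx : ∀ i ∈ s, star (v i) ⬝ᵥ x = 0) : x = 0 := by
  have : star x = 0 := eq_zero_of_forall_dotProduct_eq_zero_of_span_eq_top hv fun i hi => by
    rw [star_dotProduct, hx i hi, star_zero]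
  simpa using this

/-- Among `2d - 1` indices, a set or its complement has at least `d` elements. -/
lemma span_image_compl_eq_top_or_span_image_eq_top [Fintype ι] {d : ℕ}
    (hcard : 2 * d ≤ Fintype.card ι + 1) {u v : ι → n → ℂ}
    (hu : ∀ S : Finset ι, d ≤ S.card → Submodule.span ℂ (u '' (S : Set ι)) = ⊤)
    (hv : ∀ S : Finset ι, d ≤ S.card → Submodule.span ℂ (v '' (S : Set ι)) = ⊤)
    (s : Set ι) :
    Submodule.span ℂ (u '' sᶜ) = ⊤ ∨ Submodule.span ℂ (v '' s) = ⊤ := by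
  classical
  have hcompl := s.toFinset.card_add_card_compl
  rcases le_or_gt d s.toFinset.card with hs | hs
  · exact .inr (by simpa using hv _ hs)
  · exact .inl (by simpa using hu s.toFinsetᶜ (by omega))

lemma span_image_setOf_dotProduct_ne_zero_eq_top [Fintype ι] [Fintype n] {d : ℕ}
    (hcard : 2 * d ≤ Fintype.card ι + 1) {u v : ι → n → ℂ}
    (hu : ∀ S : Finset ι, d ≤ S.card → Submodule.span ℂ (u '' (S : Set ι)) = ⊤)
    (hv : ∀ S : Finset ι, d ≤ S.card → Submodule.span ℂ (v '' (S : Set ι)) = ⊤)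
    {w : n → ℂ} (hw : w ≠ 0) :
    Submodule.span ℂ (v '' {i | w ⬝ᵥ u i ≠ 0}) = ⊤ := by
  refine (span_image_compl_eq_top_or_span_image_eq_top hcard hu hv _).resolve_left fun h => ?_
  exact hw (eq_zero_of_forall_dotProduct_eq_zero_of_span_eq_top h fun i hi => by simpa using hi)

end Spanning

section Tensor

variable {α β ι κ : Type*}

def tensorVecBilin : (α → ℂ) →ₗ[ℂ] (β → ℂ) →ₗ[ℂ] (α × β → ℂ) :=
  LinearMap.mk₂ ℂ tensorVec
    (fun _ _ _ => funext fun _ => add_mul _ _ _)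
    (fun _ _ _ => funext fun _ => mul_assoc _ _ _)
    (fun _ _ _ => funext fun _ => mul_add _ _ _)
    (fun _ _ _ => funext fun _ => mul_left_comm _ _ _)

lemma tensorVec_single_one [DecidableEq α] [DecidableEq β] (a : α) (b : β) :
    tensorVec (Pi.single a 1) (Pi.single b 1) = Pi.single (a, b) (1 : ℂ) := by
  ext ⟨a', b'⟩
  simp only [tensorVec, Pi.single_apply, Prod.mk.injEq]
  split_ifs <;> simp_all

lemma span_tensorVec_eq_top [Finite α] [Finite β] {u : ι → α → ℂ} {v : κ → β → ℂ}
    {I : Set ι} {J : ι → Set κ} (hu : Submodule.span ℂ (u '' I) = ⊤)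
    (hv : ∀ i ∈ I, Submodule.span ℂ (v '' J i) = ⊤) :
    Submodule.span ℂ
      ((fun k : ι × κ => tensorVec (u k.1) (v k.2)) '' {k | k.1 ∈ I ∧ k.2 ∈ J k.1}) = ⊤ := by
  classical
  set T := Submodule.span ℂ
    ((fun k : ι × κ => tensorVec (u k.1) (v k.2)) '' {k | k.1 ∈ I ∧ k.2 ∈ J k.1})
  have left : ∀ i ∈ I, ∀ y, tensorVec (u i) y ∈ T := by
    intro i hi y
    have : Submodule.span ℂ (v '' J i) ≤ T.comap (tensorVecBilin (u i)) :=
      Submodule.span_le.mpr <| by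
        rintro _ ⟨j, hj, rfl⟩
        exact Submodule.subset_span ⟨(i, j), ⟨hi, hj⟩, rfl⟩
    exact this (hv i hi ▸ Submodule.mem_top)
  have all : ∀ x y, tensorVec x y ∈ T := by
    intro x y
    have : Submodule.span ℂ (u '' I) ≤ T.comap (tensorVecBilin.flip y) :=
      Submodule.span_le.mpr <| by
        rintro _ ⟨i, hi, rfl⟩
        exact left i hi y
    exact this (hu ▸ Submodule.mem_top)
  rw [eq_top_iff, ← (Pi.basisFun ℂ (α × β)).span_eq, Submodule.span_le]
  rintro _ ⟨⟨a, b⟩, rfl⟩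
  simpa [tensorVec_single_one] using all (Pi.single a 1) (Pi.single b 1)

lemma dotProduct_tensorVec [Fintype α] [Fintype β] (Φ : α × β → ℂ) (x : α → ℂ) (y : β → ℂ) :
    Φ ⬝ᵥ tensorVec x y = (x ᵥ* Matrix.of (Function.curry Φ)) ⬝ᵥ y := by
  simp only [dotProduct, vecMul, tensorVec, Fintype.sum_prod_type, Finset.sum_mul,
    Matrix.of_apply, Function.curry_apply]
  rw [Finset.sum_comm]
  exact Finset.sum_congr rfl fun _ _ => Finset.sum_congr rfl fun _ _ => by ring

lemma span_image_tensorVec_setOf_dotProduct_ne_zero_eq_top [Fintype ι] [Fintype α] {d : ℕ}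
    (hcard : 2 * d ≤ Fintype.card ι + 1) {u v : ι → α → ℂ}
    (hu : ∀ S : Finset ι, d ≤ S.card → Submodule.span ℂ (u '' (S : Set ι)) = ⊤)
    (hv : ∀ S : Finset ι, d ≤ S.card → Submodule.span ℂ (v '' (S : Set ι)) = ⊤)
    {Φ : α × α → ℂ} (hΦ : Φ ≠ 0) :
    Submodule.span ℂ ((fun k : ι × ι => tensorVec (v k.1) (v k.2)) ''
      {k | Φ ⬝ᵥ tensorVec (u k.1) (u k.2) ≠ 0}) = ⊤ := by
  obtain ⟨⟨a, b⟩, hab⟩ := Function.ne_iff.mp hΦ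
  set M := Matrix.of (Function.curry Φ)
  have hcol : (fun a => Φ (a, b)) ≠ 0 := fun h => hab (congrFun h a)
  refine eq_top_mono (Submodule.span_mono (Set.image_mono ?_)) <|
    span_tensorVec_eq_top (span_image_setOf_dotProduct_ne_zero_eq_top hcard hu hv hcol)
      (J := fun i => {j | (u i ᵥ* M) ⬝ᵥ u j ≠ 0}) fun i hi =>
        span_image_setOf_dotProduct_ne_zero_eq_top hcard hu hv fun h => hi ?_
  · rintro ⟨i, j⟩ ⟨-, hj⟩
    simpa [dotProduct_tensorVec] using hj
  · simpa [M, vecMul, dotProduct_comm] using congrFun h b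

end Tensor

section Channel

variable {m n ι : Type*} [Fintype m] [Fintype n] [Fintype ι] [DecidableEq n]

lemma choiOutput_smul_sum_outer_tensorVec (c : ℂ) (A : ι → m → ℂ) (B : ι → n → ℂ)
    (Φ : m → ℂ) :
    choiOutput (c • ∑ k, outer (tensorVec (A k) (B k))) Φ
      = ((Fintype.card m : ℂ) * c) • ∑ k, (star (Φ ⬝ᵥ A k) * (Φ ⬝ᵥ A k)) • outer (B k) := by
  ext b b'
  simp only [choiOutput, ptraceA, outer, tensorVec, dotProduct, Matrix.smul_apply,
    Matrix.sum_apply, Matrix.mul_apply, Matrix.kroneckerMap_apply, Matrix.transpose_apply,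
    Matrix.one_apply, Fintype.sum_prod_type, smul_eq_mul, star_sum, star_mul', mul_ite,
    mul_one, mul_zero, ite_mul, zero_mul, Finset.sum_ite_eq, Finset.mem_univ, if_true]
  simp only [Finset.mul_sum, Finset.sum_mul]
  rw [Finset.sum_comm]
  conv_lhs => enter [2, x]; rw [Finset.sum_comm]
  rw [Finset.sum_comm]
  refine Finset.sum_congr rfl fun _ _ => Finset.sum_congr rfl fun _ _ =>
    Finset.sum_congr rfl fun _ _ => ?_
  simp only [RCLike.star_def, map_mul]
  ring

omit [DecidableEq n] in
open scoped ComplexOrder in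
lemma rank_sum_star_mul_self_smul_outer (z : ι → ℂ) (B : ι → n → ℂ)
    (hB : Submodule.span ℂ (B '' {k | z k ≠ 0}) = ⊤) :
    (∑ k, (star (z k) * z k) • outer (B k)).rank = Fintype.card n := by
  set C : Matrix ι n ℂ := Matrix.of fun k j => z k * star (B k j)
  have hC : ∑ k, (star (z k) * z k) • outer (B k) = Cᴴ * C := by
    ext i j
    simp only [C, outer, Matrix.sum_apply, Matrix.smul_apply, Matrix.mul_apply,
      Matrix.conjTranspose_apply, Matrix.of_apply, smul_eq_mul, star_mul', star_star]
    exact Finset.sum_congr rfl fun _ _ => by simp only [RCLike.star_def]; ring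
  have hker : LinearMap.ker C.mulVecLin = ⊥ := LinearMap.ker_eq_bot'.mpr fun x hx => by
    refine eq_zero_of_forall_star_dotProduct_eq_zero_of_span_eq_top hB fun k hk => ?_
    have : z k * (star (B k) ⬝ᵥ x) = 0 := by
      simpa [C, mulVec, dotProduct, Finset.mul_sum, mul_assoc] using congrFun hx k
    exact (mul_eq_zero.mp this).resolve_left hk
  rw [hC, Matrix.rank_conjTranspose_mul_self, Matrix.rank,
    LinearMap.finrank_range_of_inj (LinearMap.ker_eq_bot.mp hker),
    Module.finrank_fintype_fun_eq_card]

lemma rank_choiOutput_smul_sum_outer_tensorVec [Nonempty m] {c : ℂ} (hc : c ≠ 0)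
    (A : ι → m → ℂ) (B : ι → n → ℂ) (Φ : m → ℂ)
    (hB : Submodule.span ℂ (B '' {k | Φ ⬝ᵥ A k ≠ 0}) = ⊤) :
    (choiOutput (c • ∑ k, outer (tensorVec (A k) (B k))) Φ).rank = Fintype.card n := by
  rw [choiOutput_smul_sum_outer_tensorVec, Matrix.rank_smul_of_mem_nonZeroDivisors _
    (mem_nonZeroDivisors_of_ne_zero (by simp [hc])), rank_sum_star_mul_self_smul_outer _ _ hB]

end Channel

lemma regroupMat_kronecker_smul_sum_outer {α ι : Type*} [Fintype α] [Fintype ι] (c : ℂ)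
    (A B : ι → α → ℂ) :
    regroupMat ((c • ∑ i, outer (tensorVec (A i) (B i))) ⊗ₖ
        (c • ∑ i, outer (tensorVec (A i) (B i))))
      = (c * c) • ∑ k : ι × ι,
          outer (tensorVec (tensorVec (A k.1) (A k.2)) (tensorVec (B k.1) (B k.2))) := by
  ext x y
  simp only [regroupMat, Matrix.kroneckerMap_apply, Matrix.smul_apply, Matrix.sum_apply,
    outer, tensorVec, smul_eq_mul, Fintype.sum_prod_type, Finset.mul_sum, Finset.sum_mul]
  rw [Finset.sum_comm]
  refine Finset.sum_congr rfl fun _ _ => Finset.sum_congr rfl fun _ _ => ?_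
  simp only [map_mul]
  ring

lemma sInf_setOf_exists_eq_of_forall_eq {X : Type*} {p : X → Prop} {f : X → ℝ} {a : ℝ}
    (hp : ∃ x, p x) (hf : ∀ x, p x → f x = a) : sInf {r | ∃ x, p x ∧ r = f x} = a := by
  have : {r | ∃ x, p x ∧ r = f x} = {a} := by
    ext r
    constructor
    · rintro ⟨x, hx, rfl⟩
      exact hf x hx
    · rintro rfl
      obtain ⟨x, hx⟩ := hp
      exact ⟨x, hx, (hf x hx).symm⟩
  rw [this, csInf_singleton]

theorem stmt19_general (d : ℕ) (hd : 2 ≤ d)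
    (ψ φ : Fin (2 * d - 1) → (Fin d → ℂ))
    (hspan : ∀ S : Finset (Fin (2 * d - 1)), d ≤ S.card →
      Submodule.span ℂ (ψ '' (S : Set (Fin (2 * d - 1)))) = ⊤ ∧
      Submodule.span ℂ (φ '' (S : Set (Fin (2 * d - 1)))) = ⊤)
    (τ : Matrix (Fin d × Fin d) (Fin d × Fin d) ℂ)
    (hτ : τ = (2 * (d : ℂ) - 1)⁻¹ • ∑ i, outer (tensorVec (ψ i) (φ i))) :
    (∀ Φ : Fin d × Fin d → ℂ, (∑ x, ‖Φ x‖ ^ 2 = 1) →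
        (choiOutput (regroupMat (τ ⊗ₖ τ)) Φ).rank = d * d) ∧
      sInf {r : ℝ | ∃ Φ : Fin d × Fin d → ℂ, (∑ x, ‖Φ x‖ ^ 2 = 1) ∧
          r = Real.logb 2 ((choiOutput (regroupMat (τ ⊗ₖ τ)) Φ).rank)}
        = 2 * Real.logb 2 d ∧
      sInf {r : ℝ | ∃ χ : Fin d → ℂ, (∑ x, ‖χ x‖ ^ 2 = 1) ∧
          r = Real.logb 2 ((choiOutput τ χ).rank)}
        = Real.logb 2 d := by
  have : NeZero d := ⟨by omega⟩
  have hc : (2 * (d : ℂ) - 1)⁻¹ ≠ 0 := inv_ne_zero fun h => by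
    have : 2 * d = 1 := by exact_mod_cast (by linear_combination h : (2 * d : ℂ) = 1)
    omega
  have hcard : 2 * d ≤ Fintype.card (Fin (2 * d - 1)) + 1 := by simp; omega
  have hψ := fun S hS => (hspan S hS).1
  have hφ := fun S hS => (hspan S hS).2
  have rank_one_copy : ∀ χ : Fin d → ℂ, (∑ x, ‖χ x‖ ^ 2 = 1) → (choiOutput τ χ).rank = d :=
    fun χ hχ => by
      rw [hτ]
      simpa using rank_choiOutput_smul_sum_outer_tensorVec hc ψ φ χ
        (span_image_setOf_dotProduct_ne_zero_eq_top hcard hψ hφ (by rintro rfl; simp at hχ))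
  have rank_two_copies : ∀ Φ : Fin d × Fin d → ℂ, (∑ x, ‖Φ x‖ ^ 2 = 1) →
      (choiOutput (regroupMat (τ ⊗ₖ τ)) Φ).rank = d * d := fun Φ hΦ => by
    rw [hτ, regroupMat_kronecker_smul_sum_outer]
    simpa using rank_choiOutput_smul_sum_outer_tensorVec (mul_ne_zero hc hc) _ _ Φ
      (span_image_tensorVec_setOf_dotProduct_ne_zero_eq_top hcard hψ hφ
        (by rintro rfl; simp at hΦ))
  refine ⟨rank_two_copies, ?_, ?_⟩
  · rw [sInf_setOf_exists_eq_of_forall_eq ⟨Pi.single 0 1, by simp [Pi.single_apply, apply_ite]⟩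
      fun Φ hΦ => by rw [rank_two_copies Φ hΦ]]
    rw [← sq, Nat.cast_pow, Real.logb_pow, Nat.cast_ofNat]
  · exact sInf_setOf_exists_eq_of_forall_eq ⟨Pi.single 0 1, by simp [Pi.single_apply, apply_ite]⟩
      fun χ hχ => by rw [rank_one_copy χ hχ]

/-- let `τ = P_S/(2d-1)` be the Choi–Jamiołkowski state of the
entanglement-breaking channel determined by a UPB as in Statement 16. Then
the minimal output Rényi-0 entropy is additive for two copies:
every output of `Λ ⊗ Λ` has full rank `d²`, the minimal output Rényi-0
entropy of `Λ ⊗ Λ` is `2 log₂ d`, and that of `Λ` is `log₂ d`. -/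
theorem stmt19 (d : ℕ) (hd : 2 ≤ d)
    (ψ φ : Fin (2 * d - 1) → (Fin d → ℂ))
    (hunit : ∀ i, (∑ x, ‖ψ i x‖ ^ 2 = 1) ∧ (∑ x, ‖φ i x‖ ^ 2 = 1))
    (horth : ∀ i j, i ≠ j →
      star (tensorVec (ψ i) (φ i)) ⬝ᵥ tensorVec (ψ j) (φ j) = 0)
    (hspan : ∀ S : Finset (Fin (2 * d - 1)), d ≤ S.card →
      Submodule.span ℂ (ψ '' (S : Set (Fin (2 * d - 1)))) = ⊤ ∧
      Submodule.span ℂ (φ '' (S : Set (Fin (2 * d - 1)))) = ⊤)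
    (τ : Matrix (Fin d × Fin d) (Fin d × Fin d) ℂ)
    (hτ : τ = (2 * (d : ℂ) - 1)⁻¹ • ∑ i, outer (tensorVec (ψ i) (φ i))) :
    (∀ Φ : Fin d × Fin d → ℂ, (∑ x, ‖Φ x‖ ^ 2 = 1) →
        (choiOutput (regroupMat (τ ⊗ₖ τ)) Φ).rank = d * d) ∧
      sInf {r : ℝ | ∃ Φ : Fin d × Fin d → ℂ, (∑ x, ‖Φ x‖ ^ 2 = 1) ∧
          r = Real.logb 2 ((choiOutput (regroupMat (τ ⊗ₖ τ)) Φ).rank)}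
        = 2 * Real.logb 2 d ∧
      sInf {r : ℝ | ∃ χ : Fin d → ℂ, (∑ x, ‖χ x‖ ^ 2 = 1) ∧
          r = Real.logb 2 ((choiOutput τ χ).rank)}
        = Real.logb 2 d :=
  stmt19_general d hd ψ φ hspan τ hτ
end
end
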